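/- arXiv:2105.05453 — 4 statements merged into one kernel-verified Lean document; each statement's English description precedes it below -/
import Mathlib

section
/- Proposition 4.7 (intersections of facets of the partitioned permutohedron): Let K ⊆ [n−1], I, J ∈ 𝔉_{A_{n−1}}(K) and k ∈ K. Then: (1) F_K(I) ∩ F_K(J) ≠ ∅ if and only if I ⊆ J or J ⊆ I; (2) F_K(I) ∩ H_K(k) ≠ ∅ if and only if I is s_k-invariant. -/
noncomputable section

namespace PermutohedronA

def permPoint (n : ℕ) (a : Fin n → ℝ) (u : Equiv.Perm (Fin n)) : Fin n → ℝ :=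
  fun i => a (u i)

def permutohedron (n : ℕ) (a : Fin n → ℝ) : Set (Fin n → ℝ) :=
  convexHull ℝ {p | ∃ u : Equiv.Perm (Fin n), p = permPoint n a u}

def facet (n : ℕ) (a : Fin n → ℝ) (I : Finset (Fin n)) : Set (Fin n → ℝ) :=
  {x ∈ permutohedron n a |
    ∑ i ∈ I, x i = ∑ i ∈ Finset.univ.filter (fun i : Fin n => (i : ℕ) < I.card), a i}

def hyperplane (n : ℕ) (k : ℕ) (hk : k + 1 < n) : Set (Fin n → ℝ) :=
  {x | x ⟨k, Nat.lt_of_succ_lt hk⟩ = x ⟨k + 1, hk⟩}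

/-- `I` is `s_k`-invariant: the transposition `(k, k+1)` fixes `I` setwise. -/
def sInvariant (n : ℕ) (k : ℕ) (hk : k + 1 < n) (I : Finset (Fin n)) : Prop :=
  I.image (Equiv.swap ⟨k, Nat.lt_of_succ_lt hk⟩ ⟨k + 1, hk⟩) = I

/-- The parabolic subgroup `𝔖_K`. -/
def SK (n : ℕ) (K : Finset ℕ) (hK : ∀ k ∈ K, k + 1 < n) :
    Subgroup (Equiv.Perm (Fin n)) :=
  Subgroup.closure
    {σ | ∃ k, ∃ hk : k ∈ K,
      σ = Equiv.swap ⟨k, Nat.lt_of_succ_lt (hK k hk)⟩ ⟨k + 1, hK k hk⟩}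

/-- The lower-subset condition defining `𝔉_{A_{n-1}}(K)` (besides nonemptiness and
properness): whenever `k` and `k+1` lie in the same `𝔖_K`-orbit and `k+1 ∈ I`,
also `k ∈ I`. -/
def lowerK (n : ℕ) (K : Finset ℕ) (hK : ∀ k ∈ K, k + 1 < n)
    (I : Finset (Fin n)) : Prop :=
  ∀ (k : ℕ) (hk : k + 1 < n),
    (∃ w ∈ SK n K hK, w ⟨k, Nat.lt_of_succ_lt hk⟩ = (⟨k + 1, hk⟩ : Fin n)) →
    (⟨k + 1, hk⟩ : Fin n) ∈ I → (⟨k, Nat.lt_of_succ_lt hk⟩ : Fin n) ∈ I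

/-- The partitioned permutohedron `P_{A_{n-1}}(K) = P ∩ ⋂_{k ∈ K} H(k)^≤`. -/
def permutohedronK (n : ℕ) (a : Fin n → ℝ) (K : Finset ℕ)
    (hK : ∀ k ∈ K, k + 1 < n) : Set (Fin n → ℝ) :=
  permutohedron n a ∩
    {x | ∀ k, ∀ hk : k ∈ K,
      x ⟨k, Nat.lt_of_succ_lt (hK k hk)⟩ ≤ x ⟨k + 1, hK k hk⟩}

end PermutohedronA

namespace PermProofAux

open Finset PermutohedronA

def lo (n m : ℕ) : Finset (Fin n) := Finset.univ.filter (fun i => (i : ℕ) < m)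

variable {n : ℕ}

lemma mem_lo {m : ℕ} {i : Fin n} : i ∈ lo n m ↔ (i : ℕ) < m := by
  simp [lo]

lemma card_lo {m : ℕ} (h : m ≤ n) : (lo n m).card = m := by
  have : lo n m = Finset.image (fun i : Fin m => (⟨(i : ℕ), lt_of_lt_of_le i.2 h⟩ : Fin n))
      Finset.univ := by
    ext j
    simp only [mem_lo, Finset.mem_image, Finset.mem_univ, true_and]
    constructor
    · intro hj; exact ⟨⟨(j : ℕ), hj⟩, rfl⟩
    · rintro ⟨i, rfl⟩; exact i.2
  rw [this, Finset.card_image_of_injective _ (fun i j hij => by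
    simpa [Fin.ext_iff] using hij), Finset.card_univ, Fintype.card_fin]

variable (a : Fin n → ℝ)

def fm (m : ℕ) : ℝ := ∑ i ∈ lo n m, a i

lemma fm_step {m : ℕ} (h : m < n) : fm a (m + 1) = fm a m + a ⟨m, h⟩ := by
  have hins : lo n (m + 1) = insert (⟨m, h⟩ : Fin n) (lo n m) := by
    ext j
    simp only [mem_lo, Finset.mem_insert, Fin.ext_iff]
    omega
  rw [fm, hins, Finset.sum_insert (by simp [mem_lo]), fm]
  ring

lemma fm_conv1 (ha : StrictMono a) {p q : ℕ} (hp : 1 ≤ p) (hpq : p ≤ q) (hq : q + 1 ≤ n) :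
    fm a p + fm a q < fm a (p - 1) + fm a (q + 1) := by
  have h1 : p - 1 < n := by omega
  have h2 : q < n := by omega
  have e1 : fm a p = fm a (p - 1) + a ⟨p - 1, h1⟩ := by
    have := fm_step a h1; rw [Nat.sub_add_cancel hp] at this; exact this
  have e2 : fm a (q + 1) = fm a q + a ⟨q, h2⟩ := fm_step a h2
  have hlt : a ⟨p - 1, h1⟩ < a ⟨q, h2⟩ := ha (by simp only [Fin.mk_lt_mk]; omega)
  rw [e1, e2]; linarith

lemma fm_conv0 (ha : StrictMono a) :
    ∀ (t p q : ℕ), t + 1 ≤ p → p ≤ q → q + t + 1 ≤ n →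
      fm a p + fm a q < fm a (p - (t + 1)) + fm a (q + (t + 1)) := by
  intro t
  induction t with
  | zero => exact fun p q hp hpq hq => fm_conv1 a ha hp hpq (by omega)
  | succ t ih =>
    intro p q hp hpq hq
    have h1 : fm a p + fm a q < fm a (p - 1) + fm a (q + 1) :=
      fm_conv1 a ha (by omega) hpq (by omega)
    have h2 : fm a (p - 1) + fm a (q + 1) <
        fm a (p - 1 - (t + 1)) + fm a (q + 1 + (t + 1)) :=
      ih (p - 1) (q + 1) (by omega) (by omega) (by omega)
    have e1 : p - 1 - (t + 1) = p - (t + 1 + 1) := by omega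
    have e2 : q + 1 + (t + 1) = q + (t + 1 + 1) := by omega
    rw [e1, e2] at h2
    linarith

lemma fm_conv (ha : StrictMono a) {c p q u : ℕ} (hcp : c < p) (hcq : c < q)
    (hsum : p + q = c + u) (hu : u ≤ n) :
    fm a p + fm a q < fm a c + fm a u := by
  rcases le_total p q with hpq | hpq
  · have key := fm_conv0 a ha (p - c - 1) p q (by omega) hpq (by omega)
    have e1 : p - (p - c - 1 + 1) = c := by omega
    have e2 : q + (p - c - 1 + 1) = u := by omega
    rw [e1, e2] at key; exact key
  · have key := fm_conv0 a ha (q - c - 1) q p (by omega) hpq (by omega)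
    have e1 : q - (q - c - 1 + 1) = c := by omega
    have e2 : p + (q - c - 1 + 1) = u := by omega
    rw [e1, e2] at key; linarith

lemma le_emb {m : ℕ} (e : Fin m ↪o Fin n) : ∀ t (i : Fin m), (i : ℕ) = t → t ≤ (e i : ℕ) := by
  intro t
  induction t with
  | zero => omega
  | succ t ih =>
    intro i hi
    have hlt : t < m := by omega
    have hji : (⟨t, hlt⟩ : Fin m) < i := by simp [Fin.lt_def]; omega
    have h1 : (e ⟨t, hlt⟩ : Fin n) < e i := e.strictMono hji
    have h2 := ih ⟨t, hlt⟩ rfl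
    have : (e ⟨t, hlt⟩ : ℕ) < (e i : ℕ) := h1
    omega

lemma fm_le_sum (ha : Monotone a) (T : Finset (Fin n)) : fm a T.card ≤ ∑ j ∈ T, a j := by
  set m := T.card with hm
  have hmn : m ≤ n := by
    simpa [Fintype.card_fin] using Finset.card_le_univ T
  let e := T.orderEmbOfFin hm.symm
  have hT : T = Finset.image (fun i => e i) Finset.univ := by
    ext j
    simp only [Finset.mem_image, Finset.mem_univ, true_and]
    constructor
    · intro hj
      have : j ∈ Set.range ⇑e := by
        rw [Finset.range_orderEmbOfFin]; exact hj
      obtain ⟨i, hi⟩ := this; exact ⟨i, hi⟩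
    · rintro ⟨i, rfl⟩; exact Finset.orderEmbOfFin_mem T hm.symm i
  have hlo : lo n m = Finset.image
      (fun i : Fin m => (⟨(i : ℕ), lt_of_lt_of_le i.2 hmn⟩ : Fin n)) Finset.univ := by
    ext j
    simp only [mem_lo, Finset.mem_image, Finset.mem_univ, true_and]
    constructor
    · intro hj; exact ⟨⟨(j : ℕ), hj⟩, rfl⟩
    · rintro ⟨i, rfl⟩; exact i.2
  rw [fm, hlo, hT]
  rw [Finset.sum_image (fun x _ y _ h => by simpa [Fin.ext_iff] using h),
    Finset.sum_image (fun x _ y _ h => e.injective h)]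
  apply Finset.sum_le_sum
  intro i _
  apply ha
  show ((⟨(i : ℕ), _⟩ : Fin n) : ℕ) ≤ (e i : ℕ)
  exact le_emb e (i : ℕ) i rfl

/-- lower bound on coordinate sums over the permutohedron -/
lemma perm_lb (ha : Monotone a) {x : Fin n → ℝ} (hx : x ∈ permutohedron n a)
    (S : Finset (Fin n)) : fm a S.card ≤ ∑ i ∈ S, x i := by
  have hconv : Convex ℝ {y : Fin n → ℝ | fm a S.card ≤ ∑ i ∈ S, y i} := by
    apply convex_halfSpace_ge
    exact { map_add := fun y z => by simp [Finset.sum_add_distrib]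
            map_smul := fun c y => by simp [Finset.mul_sum] }
  have hsub : {p | ∃ u : Equiv.Perm (Fin n), p = permPoint n a u} ⊆
      {y : Fin n → ℝ | fm a S.card ≤ ∑ i ∈ S, y i} := by
    rintro p ⟨u, rfl⟩
    show fm a S.card ≤ ∑ i ∈ S, a (u i)
    rw [← Finset.sum_image (g := fun i => u i) (f := a)
      (fun x _ y _ h => u.injective h)]
    have hc : (S.image (fun i => u i)).card = S.card :=
      Finset.card_image_of_injective _ u.injective
    rw [← hc]
    exact fm_le_sum a ha _
  exact convexHull_min hsub hconv hx

def cnt (S : Finset (Fin n)) (i : Fin n) : ℕ := (S.filter (fun j => j < i)).card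

lemma cnt_lt_card {S : Finset (Fin n)} {i : Fin n} (hi : i ∈ S) : cnt S i < S.card := by
  apply Finset.card_lt_card
  constructor
  · intro j hj
    exact (Finset.mem_filter.mp hj).1
  · intro hsub
    have := hsub hi
    simp at this

lemma cnt_mono {S : Finset (Fin n)} {i i' : Fin n} (hi : i ∈ S) (h : i < i') :
    cnt S i < cnt S i' := by
  apply Finset.card_lt_card
  constructor
  · intro j hj
    rw [Finset.mem_filter] at hj ⊢
    exact ⟨hj.1, lt_trans hj.2 h⟩
  · intro hsub
    have hmem : i ∈ S.filter (fun j => j < i') := Finset.mem_filter.mpr ⟨hi, h⟩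
    have := hsub hmem
    simp at this

lemma cnt_ne {S : Finset (Fin n)} {i i' : Fin n} (hi : i ∈ S) (hi' : i' ∈ S)
    (h : i ≠ i') : cnt S i ≠ cnt S i' := by
  rcases lt_or_gt_of_ne h with h' | h'
  · exact Nat.ne_of_lt (cnt_mono hi h')
  · exact Nat.ne_of_gt (cnt_mono hi' h')

/-- the key permutation construction -/
lemma exists_perm (K : Finset ℕ) (hK : ∀ k ∈ K, k + 1 < n)
    (I J : Finset (Fin n)) (hIJ : I ⊆ J)
    (hIlow : lowerK n K hK I) (hJlow : lowerK n K hK J) :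
    ∃ u : Equiv.Perm (Fin n),
      I.image u = lo n I.card ∧ J.image u = lo n J.card ∧
      ∀ k (hkK : k ∈ K),
        u ⟨k, Nat.lt_of_succ_lt (hK k hkK)⟩ < u ⟨k + 1, hK k hkK⟩ := by
  classical
  set r : Fin n → ℕ := fun i =>
    if i ∈ I then cnt I i
    else if i ∈ J then I.card + cnt (J \ I) i
    else J.card + cnt Jᶜ i with hr
  have hJn : J.card ≤ n := by simpa [Fintype.card_fin] using Finset.card_le_univ J
  have hIJc : I.card ≤ J.card := Finset.card_le_card hIJ
  have hrI : ∀ i ∈ I, r i < I.card := by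
    intro i hi; simp only [hr, if_pos hi]; exact cnt_lt_card hi
  have hrJ : ∀ i, i ∈ J → i ∉ I → I.card ≤ r i ∧ r i < J.card := by
    intro i hiJ hiI
    simp only [hr, if_neg hiI, if_pos hiJ]
    refine ⟨Nat.le_add_right _ _, ?_⟩
    have h1 : cnt (J \ I) i < (J \ I).card := cnt_lt_card (Finset.mem_sdiff.mpr ⟨hiJ, hiI⟩)
    have h2 : (J \ I).card = J.card - I.card := Finset.card_sdiff_of_subset hIJ
    omega
  have hrC : ∀ i, i ∉ J → J.card ≤ r i ∧ r i < n := by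
    intro i hiJ
    have hiI : i ∉ I := fun h => hiJ (hIJ h)
    simp only [hr, if_neg hiI, if_neg hiJ]
    refine ⟨Nat.le_add_right _ _, ?_⟩
    have h1 : cnt Jᶜ i < Jᶜ.card := cnt_lt_card (Finset.mem_compl.mpr hiJ)
    have h2 : Jᶜ.card = n - J.card := by
      rw [Finset.card_compl, Fintype.card_fin]
    omega
  have hbound : ∀ i, r i < n := by
    intro i
    by_cases hi : i ∈ I
    · exact lt_of_lt_of_le (hrI i hi) (le_trans hIJc hJn)
    · by_cases hj : i ∈ J
      · exact lt_of_lt_of_le ((hrJ i hj hi).2) hJn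
      · exact (hrC i hj).2
  have hinj : Function.Injective (fun i => (⟨r i, hbound i⟩ : Fin n)) := by
    intro i i' h
    simp only [Fin.mk.injEq] at h
    by_contra hne
    by_cases hiI : i ∈ I <;> by_cases hiI' : i' ∈ I
    · exact cnt_ne hiI hiI' hne (by simpa [hr, if_pos hiI, if_pos hiI'] using h)
    · by_cases hiJ' : i' ∈ J
      · have := hrI i hiI; have := hrJ i' hiJ' hiI'; omega
      · have := hrI i hiI; have := hrC i' hiJ'; have := hIJc; omega
    · by_cases hiJ : i ∈ J
      · have := hrI i' hiI'; have := hrJ i hiJ hiI; omega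
      · have := hrI i' hiI'; have := hrC i hiJ; have := hIJc; omega
    · by_cases hiJ : i ∈ J <;> by_cases hiJ' : i' ∈ J
      · have hmem : i ∈ J \ I := Finset.mem_sdiff.mpr ⟨hiJ, hiI⟩
        have hmem' : i' ∈ J \ I := Finset.mem_sdiff.mpr ⟨hiJ', hiI'⟩
        exact cnt_ne hmem hmem' hne
          (by simpa [hr, if_neg hiI, if_neg hiI', if_pos hiJ, if_pos hiJ'] using h)
      · have := hrJ i hiJ hiI; have := hrC i' hiJ'; omega
      · have := hrJ i' hiJ' hiI'; have := hrC i hiJ; omega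
      · have hmem : i ∈ Jᶜ := Finset.mem_compl.mpr hiJ
        have hmem' : i' ∈ Jᶜ := Finset.mem_compl.mpr hiJ'
        exact cnt_ne hmem hmem' hne
          (by simpa [hr, if_neg hiI, if_neg hiI', if_neg hiJ, if_neg hiJ'] using h)
  let u : Equiv.Perm (Fin n) :=
    Equiv.ofBijective _ (Finite.injective_iff_bijective.mp hinj)
  have hu : ∀ i, u i = ⟨r i, hbound i⟩ := fun i => rfl
  refine ⟨u, ?_, ?_, ?_⟩
  · apply Finset.eq_of_subset_of_card_le
    · intro j hj
      obtain ⟨i, hi, rfl⟩ := Finset.mem_image.mp hj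
      rw [hu]
      exact mem_lo.mpr (hrI i hi)
    · rw [card_lo (le_trans hIJc hJn), Finset.card_image_of_injective _ u.injective]
  · apply Finset.eq_of_subset_of_card_le
    · intro j hj
      obtain ⟨i, hij, rfl⟩ := Finset.mem_image.mp hj
      rw [hu]
      apply mem_lo.mpr
      by_cases hiI : i ∈ I
      · exact lt_of_lt_of_le (hrI i hiI) hIJc
      · exact (hrJ i hij hiI).2
    · rw [card_lo hJn, Finset.card_image_of_injective _ u.injective]
  · intro k hkK
    have hk1 : k + 1 < n := hK k hkK
    set i : Fin n := ⟨k, Nat.lt_of_succ_lt hk1⟩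
    set i' : Fin n := ⟨k + 1, hk1⟩
    have hlt : i < i' := by simp [i, i', Fin.lt_def]
    have hswap : Equiv.swap i i' ∈ SK n K hK :=
      Subgroup.subset_closure ⟨k, hkK, rfl⟩
    have hlowI : i' ∈ I → i ∈ I :=
      hIlow k hk1 ⟨Equiv.swap i i', hswap, Equiv.swap_apply_left i i'⟩
    have hlowJ : i' ∈ J → i ∈ J :=
      hJlow k hk1 ⟨Equiv.swap i i', hswap, Equiv.swap_apply_left i i'⟩
    rw [hu, hu, Fin.mk_lt_mk]
    by_cases hI' : i' ∈ I
    · have hI : i ∈ I := hlowI hI'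
      simp only [hr, if_pos hI, if_pos hI']
      exact cnt_mono hI hlt
    · by_cases hJ' : i' ∈ J
      · have hJi : i ∈ J := hlowJ hJ'
        by_cases hIi : i ∈ I
        · have := hrI i hIi; have := hrJ i' hJ' hI'; omega
        · have hmem : i ∈ J \ I := Finset.mem_sdiff.mpr ⟨hJi, hIi⟩
          simp only [hr, if_neg hIi, if_neg hI', if_pos hJi, if_pos hJ']
          exact Nat.add_lt_add_left (cnt_mono hmem hlt) _
      · by_cases hJi : i ∈ J
        · by_cases hIi : i ∈ I
          · have := hrI i hIi; have := hrC i' hJ'; omega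
          · have := hrJ i hJi hIi; have := hrC i' hJ'; omega
        · have hmem : i ∈ Jᶜ := Finset.mem_compl.mpr hJi
          simp only [hr, if_neg (fun h => hJi (hIJ h)), if_neg hI', if_neg hJ', if_neg hJi]
          exact Nat.add_lt_add_left (cnt_mono hmem hlt) _

/-- backward direction of part (1): if `I ⊆ J` the intersection is nonempty. -/
lemma nonempty_of_subset (ha : StrictMono a) (K : Finset ℕ) (hK : ∀ k ∈ K, k + 1 < n)
    (I J : Finset (Fin n)) (hIJ : I ⊆ J)
    (hIlow : lowerK n K hK I) (hJlow : lowerK n K hK J) :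
    ((facet n a I ∩ permutohedronK n a K hK) ∩
      (facet n a J ∩ permutohedronK n a K hK)).Nonempty := by
  obtain ⟨u, hImg, hJmg, hmono⟩ := exists_perm K hK I J hIJ hIlow hJlow
  set x := permPoint n a u with hx
  have hxP : x ∈ permutohedron n a := subset_convexHull ℝ _ ⟨u, rfl⟩
  have hsum : ∀ S : Finset (Fin n), S.image u = lo n S.card →
      ∑ i ∈ S, x i = fm a S.card := by
    intro S hS
    have : ∑ i ∈ S, x i = ∑ j ∈ S.image (⇑u), a j :=
      (Finset.sum_image (fun p _ q _ h => u.injective h)).symm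
    rw [this, hS]; rfl
  have hxK : x ∈ {y : Fin n → ℝ | ∀ k, ∀ hk : k ∈ K,
      y ⟨k, Nat.lt_of_succ_lt (hK k hk)⟩ ≤ y ⟨k + 1, hK k hk⟩} := by
    intro k hkK
    exact ha.monotone (le_of_lt (hmono k hkK))
  exact ⟨x, ⟨⟨hxP, hsum I hImg⟩, hxP, hxK⟩, ⟨hxP, hsum J hJmg⟩, hxP, hxK⟩

end PermProofAux

end

open PermutohedronA in
theorem statement8 (n : ℕ) (hn : 2 ≤ n) (a : Fin n → ℝ) (ha : StrictMono a)
    (hsum : ∑ i, a i = 0) (K : Finset ℕ) (hK : ∀ k ∈ K, k + 1 < n)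
    (I J : Finset (Fin n))
    (hIne : I.Nonempty) (hIpr : I ≠ Finset.univ) (hIlow : lowerK n K hK I)
    (hJne : J.Nonempty) (hJpr : J ≠ Finset.univ) (hJlow : lowerK n K hK J)
    (k : ℕ) (hk : k ∈ K) :
    (((facet n a I ∩ permutohedronK n a K hK) ∩
        (facet n a J ∩ permutohedronK n a K hK)).Nonempty ↔ I ⊆ J ∨ J ⊆ I) ∧
    (((facet n a I ∩ permutohedronK n a K hK) ∩
        (hyperplane n k (hK k hk) ∩ permutohedronK n a K hK)).Nonempty ↔
      sInvariant n k (hK k hk) I) := by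
  classical
  open PermProofAux in
  constructor
  · -- part (1)
    constructor
    · rintro ⟨x, ⟨⟨hxP, hxI⟩, -⟩, ⟨-, hxJ⟩, -⟩
      by_contra hcon
      push_neg at hcon
      obtain ⟨hnIJ, hnJI⟩ := hcon
      obtain ⟨i₀, hi₀I, hi₀J⟩ := Finset.not_subset.mp hnIJ
      obtain ⟨j₀, hj₀J, hj₀I⟩ := Finset.not_subset.mp hnJI
      have hc1 : (I ∩ J).card < I.card := by
        apply Finset.card_lt_card
        exact ⟨Finset.inter_subset_left, fun hsub =>
          hi₀J (Finset.mem_inter.mp (hsub hi₀I)).2⟩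
      have hc2 : (I ∩ J).card < J.card := by
        apply Finset.card_lt_card
        exact ⟨Finset.inter_subset_right, fun hsub =>
          hj₀I (Finset.mem_inter.mp (hsub hj₀J)).1⟩
      have hcu : (I ∩ J).card + (I ∪ J).card = I.card + J.card :=
        Finset.card_inter_add_card_union I J
      have hun : (I ∪ J).card ≤ n := by
        simpa [Fintype.card_fin] using Finset.card_le_univ (I ∪ J)
      have key : fm a I.card + fm a J.card < fm a (I ∩ J).card + fm a (I ∪ J).card :=
        fm_conv a ha hc1 hc2 (by omega) hun
      have lb1 : fm a (I ∩ J).card ≤ ∑ i ∈ I ∩ J, x i := perm_lb a ha.monotone hxP _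
      have lb2 : fm a (I ∪ J).card ≤ ∑ i ∈ I ∪ J, x i := perm_lb a ha.monotone hxP _
      have hsx : ∑ i ∈ I ∪ J, x i + ∑ i ∈ I ∩ J, x i = ∑ i ∈ I, x i + ∑ i ∈ J, x i :=
        Finset.sum_union_inter
      have hxI' : ∑ i ∈ I, x i = fm a I.card := hxI
      have hxJ' : ∑ i ∈ J, x i = fm a J.card := hxJ
      linarith
    · rintro (h | h)
      · exact nonempty_of_subset a ha K hK I J h hIlow hJlow
      · rw [Set.inter_comm]
        exact nonempty_of_subset a ha K hK J I h hJlow hIlow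
  · -- part (2)
    set kf : Fin n := ⟨k, Nat.lt_of_succ_lt (hK k hk)⟩ with hkf
    set ks : Fin n := ⟨k + 1, hK k hk⟩ with hks
    have hkflt : kf < ks := by simp [hkf, hks, Fin.lt_def]
    have hkfne : kf ≠ ks := ne_of_lt hkflt
    have hlowI : ks ∈ I → kf ∈ I := by
      intro h
      exact hIlow k (hK k hk) ⟨Equiv.swap kf ks,
        Subgroup.subset_closure ⟨k, hk, rfl⟩, Equiv.swap_apply_left kf ks⟩ h
    constructor
    · rintro ⟨x, ⟨⟨hxP, hxI⟩, -⟩, hxk, -⟩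
      by_cases hksI : ks ∈ I
      · -- both in I, invariant
        have hkfI : kf ∈ I := hlowI hksI
        apply Finset.eq_of_subset_of_card_le
        · intro j hj
          obtain ⟨i, hiI, rfl⟩ := Finset.mem_image.mp hj
          rcases eq_or_ne i kf with rfl | h1
          · rwa [Equiv.swap_apply_left]
          rcases eq_or_ne i ks with rfl | h2
          · rwa [Equiv.swap_apply_right]
          · rwa [Equiv.swap_apply_of_ne_of_ne h1 h2]
        · rw [Finset.card_image_of_injective _ (Equiv.swap kf ks).injective]
      · by_cases hkfI : kf ∈ I
        · -- contradiction
          exfalso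
          have hxk' : x kf = x ks := hxk
          have hcard : 1 ≤ I.card := Finset.card_pos.mpr ⟨kf, hkfI⟩
          have hcn : (insert ks I).card ≤ n := by
            simpa [Fintype.card_fin] using Finset.card_le_univ (insert ks I)
          have hci : (insert ks I).card = I.card + 1 := Finset.card_insert_of_notMem hksI
          have hce : (I.erase kf).card = I.card - 1 := Finset.card_erase_of_mem hkfI
          have lb1 : fm a (I.erase kf).card ≤ ∑ i ∈ I.erase kf, x i :=
            perm_lb a ha.monotone hxP _
          have lb2 : fm a (insert ks I).card ≤ ∑ i ∈ insert ks I, x i :=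
            perm_lb a ha.monotone hxP _
          have he : ∑ i ∈ I.erase kf, x i + x kf = ∑ i ∈ I, x i :=
            Finset.sum_erase_add I x hkfI
          have hins : ∑ i ∈ insert ks I, x i = x ks + ∑ i ∈ I, x i :=
            Finset.sum_insert hksI
          have hxI' : ∑ i ∈ I, x i = fm a I.card := hxI
          have key : fm a I.card + fm a I.card <
              fm a (I.card - 1) + fm a (I.card + 1) :=
            fm_conv a ha (by omega) (by omega) (by omega) (by omega)
          rw [hce] at lb1
          rw [hci] at lb2
          linarith
        · -- both out of I, invariant
          have : ∀ i ∈ I, Equiv.swap kf ks i = i := by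
            intro i hiI
            exact Equiv.swap_apply_of_ne_of_ne
              (fun h => hkfI (h ▸ hiI)) (fun h => hksI (h ▸ hiI))
          calc I.image (Equiv.swap kf ks) = I.image id := Finset.image_congr
                (fun i hiI => this i hiI)
            _ = I := Finset.image_id
    · intro hinv
      obtain ⟨u, hImg, -, hmono⟩ := exists_perm K hK I I Finset.Subset.rfl hIlow hIlow
      set v := permPoint n a u with hv
      have hvP : v ∈ permutohedron n a := subset_convexHull ℝ _ ⟨u, rfl⟩
      set w : Fin n → ℝ := fun i => v (Equiv.swap kf ks i) with hw
      have hwP : w ∈ permutohedron n a :=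
        subset_convexHull ℝ _ ⟨(Equiv.swap kf ks).trans u, rfl⟩
      set x : Fin n → ℝ := fun i => 2⁻¹ * v i + 2⁻¹ * w i with hxdef
      have hxcomb : x = (2⁻¹ : ℝ) • v + (2⁻¹ : ℝ) • w := by
        funext i; simp [hxdef, Pi.add_apply, Pi.smul_apply, smul_eq_mul]
      have hxP : x ∈ permutohedron n a := by
        rw [hxcomb]
        exact (convex_convexHull ℝ _) hvP hwP (by norm_num) (by norm_num) (by norm_num)
      have hvmono : ∀ k' (hk' : k' ∈ K),
          v ⟨k', Nat.lt_of_succ_lt (hK k' hk')⟩ ≤ v ⟨k' + 1, hK k' hk'⟩ := by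
        intro k' hk'
        exact ha.monotone (le_of_lt (hmono k' hk'))
      have hvkk : v kf ≤ v ks := hvmono k hk
      have hsumv : ∑ i ∈ I, v i = fm a I.card := by
        have : ∑ i ∈ I, v i = ∑ j ∈ I.image (⇑u), a j :=
          (Finset.sum_image (fun p _ q _ h => u.injective h)).symm
        rw [this, hImg]; rfl
      have hinv' : Finset.image (⇑(Equiv.swap kf ks)) I = I := hinv
      have hsumw : ∑ i ∈ I, w i = ∑ i ∈ I, v i := by
        calc ∑ i ∈ I, w i = ∑ i ∈ I.image (⇑(Equiv.swap kf ks)), w i := by rw [hinv']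
          _ = ∑ i ∈ I, w (Equiv.swap kf ks i) :=
            Finset.sum_image (fun p _ q _ h => (Equiv.swap kf ks).injective h)
          _ = ∑ i ∈ I, v i := Finset.sum_congr rfl (fun i _ => by
            show v (Equiv.swap kf ks (Equiv.swap kf ks i)) = v i
            rw [Equiv.swap_apply_self])
      have hsumx : ∑ i ∈ I, x i = fm a I.card := by
        have h0 : ∑ i ∈ I, x i = ∑ i ∈ I, (2⁻¹ * v i + 2⁻¹ * w i) := rfl
        rw [h0, Finset.sum_add_distrib, ← Finset.mul_sum, ← Finset.mul_sum,
          hsumw, hsumv]; ring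
      have hxhyp : x kf = x ks := by
        show 2⁻¹ * v kf + 2⁻¹ * v (Equiv.swap kf ks kf) =
          2⁻¹ * v ks + 2⁻¹ * v (Equiv.swap kf ks ks)
        rw [Equiv.swap_apply_left, Equiv.swap_apply_right]
        ring
      have hxK : ∀ k', ∀ hk' : k' ∈ K,
          x ⟨k', Nat.lt_of_succ_lt (hK k' hk')⟩ ≤ x ⟨k' + 1, hK k' hk'⟩ := by
        intro k' hk'
        set pf : Fin n := ⟨k', Nat.lt_of_succ_lt (hK k' hk')⟩ with hpf
        set ps : Fin n := ⟨k' + 1, hK k' hk'⟩ with hps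
        have hv1 : v pf ≤ v ps := hvmono k' hk'
        show 2⁻¹ * v pf + 2⁻¹ * v (Equiv.swap kf ks pf) ≤
          2⁻¹ * v ps + 2⁻¹ * v (Equiv.swap kf ks ps)
        rcases Nat.lt_trichotomy k' k with hlt | heq | hgt
        · rcases Nat.lt_or_ge (k' + 1) k with hlt1 | hge1
          · -- k' + 1 < k : swap fixes pf, ps
            rw [Equiv.swap_apply_of_ne_of_ne
                (by simp [hpf, hkf, Fin.ext_iff]; omega)
                (by simp [hpf, hks, Fin.ext_iff]; omega),
              Equiv.swap_apply_of_ne_of_ne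
                (by simp [hps, hkf, Fin.ext_iff]; omega)
                (by simp [hps, hks, Fin.ext_iff]; omega)]
            linarith
          · -- k' + 1 = k
            have hpse : ps = kf := by simp [hps, hkf, Fin.ext_iff]; omega
            rw [Equiv.swap_apply_of_ne_of_ne
                (by simp [hpf, hkf, Fin.ext_iff]; omega)
                (by simp [hpf, hks, Fin.ext_iff]; omega),
              hpse, Equiv.swap_apply_left]
            have : v pf ≤ v kf := hpse ▸ hv1
            linarith
        · -- k' = k
          have hpfe : pf = kf := by simp [hpf, hkf, Fin.ext_iff]; omega
          have hpse : ps = ks := by simp [hps, hks, Fin.ext_iff]; omega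
          rw [hpfe, hpse, Equiv.swap_apply_left, Equiv.swap_apply_right]
          linarith
        · rcases Nat.lt_or_ge (k + 1) k' with hlt1 | hge1
          · -- k + 1 < k' : swap fixes pf, ps
            rw [Equiv.swap_apply_of_ne_of_ne
                (by simp [hpf, hkf, Fin.ext_iff]; omega)
                (by simp [hpf, hks, Fin.ext_iff]; omega),
              Equiv.swap_apply_of_ne_of_ne
                (by simp [hps, hkf, Fin.ext_iff]; omega)
                (by simp [hps, hks, Fin.ext_iff]; omega)]
            linarith
          · -- k' = k + 1
            have hpfe : pf = ks := by simp [hpf, hks, Fin.ext_iff]; omega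
            rw [hpfe, Equiv.swap_apply_right,
              Equiv.swap_apply_of_ne_of_ne
                (by simp [hps, hkf, Fin.ext_iff]; omega)
                (by simp [hps, hks, Fin.ext_iff]; omega)]
            have h2 : v ks ≤ v ps := hpfe ▸ hv1
            linarith
      exact ⟨x, ⟨⟨hxP, hsumx⟩, hxP, hxK⟩, hxhyp, hxP, hxK⟩
end

section
/- Non-negativity of the coefficients c_k^{I,v} (equation (5.1) of the paper): Let v ∈ 𝔖_K. (a) For every nonempty proper subset I ⊆ [n] and every k ∈ [n−1] \ K, |I ∩ [k]| = |v(I) ∩ [k]|. (b) If moreover I ∈ 𝔉_{A_{n−1}}(K), then |v(I) ∩ [k]| ≤ |I ∩ [k]| for every k ∈ [n−1]. (Equivalently: e_I − e_{v(I)} = Σ_{k∈K} c_k^{I,v} α_k^∨ with non-negative integer coefficients c_k^{I,v} = |I∩[k]| − |v(I)∩[k]|.) -/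
namespace PermutohedronA

/-- `|I ∩ [k]|` (0-indexed: the number of elements of `I` with value `≤ k`,
which is the paper's `|I ∩ [k+1]|` in 1-indexed notation). -/
def cnt (n : ℕ) (I : Finset (Fin n)) (k : ℕ) : ℕ :=
  (I.filter (fun i : Fin n => (i : ℕ) ≤ k)).card

/-- Any predicate preserved by each generating transposition is preserved by
every element of `𝔖_K`. -/
theorem sk_inv {n : ℕ} {K : Finset ℕ} {hK : ∀ k ∈ K, k + 1 < n}
    (p : Fin n → Prop)
    (hp : ∀ j (hj : j ∈ K), p ⟨j, Nat.lt_of_succ_lt (hK j hj)⟩ ↔ p ⟨j + 1, hK j hj⟩)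
    {v : Equiv.Perm (Fin n)} (hv : v ∈ SK n K hK) (i : Fin n) :
    p (v i) ↔ p i := by
  induction hv using Subgroup.closure_induction generalizing i with
  | mem x hx =>
      obtain ⟨j, hj, rfl⟩ := hx
      rcases eq_or_ne i ⟨j, Nat.lt_of_succ_lt (hK j hj)⟩ with rfl | h1
      · rw [Equiv.swap_apply_left]; exact (hp j hj).symm
      rcases eq_or_ne i ⟨j + 1, hK j hj⟩ with rfl | h2
      · rw [Equiv.swap_apply_right]; exact hp j hj
      · rw [Equiv.swap_apply_of_ne_of_ne h1 h2]
  | one => simp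
  | mul x y _ _ hx hy => simpa using (hx (y i)).trans (hy i)
  | inv x _ hx => simpa using (hx (x⁻¹ i)).symm

theorem card_filter_image {n : ℕ} (v : Equiv.Perm (Fin n)) (I : Finset (Fin n))
    (p : Fin n → Prop) [DecidablePred p] :
    ((I.image v).filter p).card = (I.filter fun i => p (v i)).card := by
  rw [Finset.filter_image, Finset.card_image_of_injective _ v.injective]

end PermutohedronA

open PermutohedronA in
/-- (a): for `k ∉ K`, `|I ∩ [k]| = |v(I) ∩ [k]|`; (b): for `I ∈ 𝔉(K)`,
`|v(I) ∩ [k]| ≤ |I ∩ [k]|` for all `k`.  (The coefficient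
`c_k^{I,v} = |I ∩ [k]| − |v(I) ∩ [k]|` of `α_k^∨` in `e_I − e_{v(I)}`
is therefore a non-negative integer.) -/
theorem statement11 (n : ℕ) (hn : 2 ≤ n) (K : Finset ℕ) (hK : ∀ k ∈ K, k + 1 < n)
    (v : Equiv.Perm (Fin n)) (hv : v ∈ SK n K hK) :
    (∀ I : Finset (Fin n), I.Nonempty → I ≠ Finset.univ →
      ∀ (k : ℕ), k + 1 < n → k ∉ K →
        cnt n I k = cnt n (I.image v) k) ∧
    (∀ I : Finset (Fin n), I.Nonempty → I ≠ Finset.univ → lowerK n K hK I →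
      ∀ (k : ℕ), k + 1 < n →
        cnt n (I.image v) k ≤ cnt n I k) := by
  have parta : ∀ (I : Finset (Fin n)) (k : ℕ), k + 1 < n → k ∉ K →
      cnt n I k = cnt n (I.image v) k := by
    intro I k hk hkK
    unfold cnt
    rw [card_filter_image]
    congr 1
    refine (Finset.filter_congr fun i _ => ?_).symm
    refine sk_inv (fun i : Fin n => (i : ℕ) ≤ k) ?_ hv i
    intro j hj
    have hjk : j ≠ k := fun h => hkK (h ▸ hj)
    show j ≤ k ↔ j + 1 ≤ k
    omega
  refine ⟨fun I _ _ => parta I, ?_⟩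
  intro I _ _ hlow k hk
  by_cases hkK : k ∈ K
  swap
  · exact le_of_eq (parta I k hk hkK).symm
  -- the start `a` of the run of `K` containing `k`
  have hdP : DecidablePred (fun a => ∀ m, a ≤ m → m ≤ k → m ∈ K) :=
    fun _ => Classical.dec _
  have hPk : ∀ m, k ≤ m → m ≤ k → m ∈ K := fun m h1 h2 => by
    have : m = k := le_antisymm h2 h1
    rwa [this]
  have hex : ∃ a, ∀ m, a ≤ m → m ≤ k → m ∈ K := ⟨k, hPk⟩
  set a := Nat.find hex with ha_def
  have haK : ∀ m, a ≤ m → m ≤ k → m ∈ K := Nat.find_spec hex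
  have hak : a ≤ k := Nat.find_le hPk
  have ha' : ∀ j ∈ K, j + 1 ≠ a := by
    intro j hj hja
    have hmin : ¬ ∀ m, j ≤ m → m ≤ k → m ∈ K := Nat.find_min hex (by omega)
    apply hmin
    intro m h1 h2
    rcases eq_or_lt_of_le h1 with rfl | h
    · exact hj
    · exact haK m (by omega) h2
  -- the end `b` of the run of `K` containing `k`
  have hdQ : DecidablePred (fun b => k ≤ b ∧ b + 1 ∉ K) :=
    fun _ => Classical.dec _
  have hQn : k ≤ n - 1 ∧ (n - 1) + 1 ∉ K := by
    constructor
    · omega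
    · intro h
      have := hK _ h
      omega
  have hexQ : ∃ b, k ≤ b ∧ b + 1 ∉ K := ⟨n - 1, hQn⟩
  set b := Nat.find hexQ with hb_def
  have hkb : k ≤ b := (Nat.find_spec hexQ).1
  have hbK : b + 1 ∉ K := (Nat.find_spec hexQ).2
  have hbn : b ≤ n - 1 := Nat.find_le hQn
  have hrun : ∀ m, a ≤ m → m ≤ b → m ∈ K := by
    intro m h1 h2
    rcases le_or_gt m k with h | h
    · exact haK m h1 h
    · have hmin : ¬ (k ≤ m - 1 ∧ (m - 1) + 1 ∉ K) := Nat.find_min hexQ (by omega)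
      by_contra hmK
      exact hmin ⟨by omega, by rwa [show m - 1 + 1 = m by omega]⟩
  -- invariance of the two relevant sets under v
  have hinvLow : ∀ i : Fin n, ((v i : ℕ) < a ↔ (i : ℕ) < a) := by
    intro i
    refine sk_inv (fun i : Fin n => (i : ℕ) < a) ?_ hv i
    intro j hj
    have := ha' j hj
    show j < a ↔ j + 1 < a
    omega
  have hinvM : ∀ i : Fin n,
      ((a ≤ (v i : ℕ) ∧ (v i : ℕ) ≤ b + 1) ↔ (a ≤ (i : ℕ) ∧ (i : ℕ) ≤ b + 1)) := by
    intro i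
    refine sk_inv (fun i : Fin n => a ≤ (i : ℕ) ∧ (i : ℕ) ≤ b + 1) ?_ hv i
    intro j hj
    have h1 := ha' j hj
    have h2 : j ≠ b + 1 := fun h => hbK (h ▸ hj)
    show (a ≤ j ∧ j ≤ b + 1) ↔ (a ≤ j + 1 ∧ j + 1 ≤ b + 1)
    omega
  -- split the count at `a`
  have hsplit : ∀ f : Fin n → ℕ, (I.filter fun i => f i ≤ k).card
      = (I.filter fun i => f i < a).card + (I.filter fun i => a ≤ f i ∧ f i ≤ k).card := by
    intro f
    classical
    rw [← Finset.card_union_of_disjoint]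
    · congr 1
      rw [← Finset.filter_or]
      exact Finset.filter_congr fun i _ => by constructor <;> intro h <;> omega
    · rw [Finset.disjoint_left]
      intro x hx hx'
      simp only [Finset.mem_filter] at hx hx'
      omega
  unfold cnt
  rw [card_filter_image]
  have e1 := hsplit (fun i => ((v i : ℕ)))
  have e2 := hsplit (fun i => ((i : ℕ)))
  rw [e1, e2]
  -- the low parts agree
  have hlowq : (I.filter fun i => ((v i : ℕ)) < a).card
      = (I.filter fun i : Fin n => (i : ℕ) < a).card := by
    congr 1
    exact Finset.filter_congr fun i _ => hinvLow i
  -- the middle parts compare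
  have hmid : (I.filter fun i => a ≤ ((v i : ℕ)) ∧ ((v i : ℕ)) ≤ k).card
      ≤ (I.filter fun i : Fin n => a ≤ (i : ℕ) ∧ (i : ℕ) ≤ k).card := by
    by_cases hall : ∀ m, a ≤ m → m ≤ k → ∀ hm : m < n, (⟨m, hm⟩ : Fin n) ∈ I
    · apply Finset.card_le_card_of_injOn v
      · intro i hi
        simp only [Finset.mem_coe, Finset.mem_filter] at hi ⊢
        obtain ⟨hiI, h1, h2⟩ := hi
        refine ⟨?_, h1, h2⟩
        have := hall (v i) h1 h2 (v i).2
        simpa using this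
      · exact fun x _ y _ h => v.injective h
    · push_neg at hall
      obtain ⟨j, hja, hjk, hjm, hjI⟩ := hall
      have hIempty : ∀ d (hd : j + d < n), j + d ≤ b + 1 → (⟨j + d, hd⟩ : Fin n) ∉ I := by
        intro d
        induction d with
        | zero => intro hd _; exact hjI
        | succ d ih =>
          intro hd hdb
          have hmemK : j + d ∈ K := hrun (j + d) (by omega) (by omega)
          intro hin
          apply ih (by omega) (by omega)
          have hgen : Equiv.swap (⟨j + d, Nat.lt_of_succ_lt (hK _ hmemK)⟩ : Fin n)
              ⟨j + d + 1, hK _ hmemK⟩ ∈ SK n K hK :=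
            Subgroup.subset_closure ⟨j + d, hmemK, rfl⟩
          exact hlow (j + d) (hK _ hmemK)
            ⟨_, hgen, Equiv.swap_apply_left _ _⟩ hin
      calc (I.filter fun i => a ≤ ((v i : ℕ)) ∧ ((v i : ℕ)) ≤ k).card
          ≤ (I.filter fun i => a ≤ ((v i : ℕ)) ∧ ((v i : ℕ)) ≤ b + 1).card :=
            Finset.card_le_card
              (Finset.monotone_filter_right _ fun i _ hi => ⟨hi.1, by omega⟩)
        _ = (I.filter fun i : Fin n => a ≤ (i : ℕ) ∧ (i : ℕ) ≤ b + 1).card := by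
            congr 1
            exact Finset.filter_congr fun i _ => hinvM i
        _ = (I.filter fun i : Fin n => a ≤ (i : ℕ) ∧ (i : ℕ) < j).card := by
            congr 1
            apply Finset.filter_congr
            intro i hi
            have hin := i.isLt
            constructor
            · rintro ⟨h1, h2⟩
              refine ⟨h1, ?_⟩
              by_contra h3
              push_neg at h3
              have hlt : j + ((i : ℕ) - j) < n := by omega
              have heq : (⟨j + ((i : ℕ) - j), hlt⟩ : Fin n) = i :=
                Fin.ext (show j + ((i : ℕ) - j) = (i : ℕ) by omega)
              exact hIempty _ hlt (by omega) (by rw [heq]; exact hi)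
            · rintro ⟨h1, h2⟩
              exact ⟨h1, by omega⟩
        _ ≤ (I.filter fun i : Fin n => a ≤ (i : ℕ) ∧ (i : ℕ) ≤ k).card :=
            Finset.card_le_card
              (Finset.monotone_filter_right _ fun i _ hi => ⟨hi.1, by omega⟩)
  omega
end

section
/- Lemma 5.5 (vanishing of coefficients): Let I ∈ 𝔉_{A_{n−1}}(K), v ∈ 𝔖_K, k ∈ K, and let N be the 𝔖_K-orbit of k in [n]. If v(I) ∩ N ⊆ [k] ∩ N or v(I) ∩ N ⊇ [k] ∩ N, then |I ∩ [k]| = |v(I) ∩ [k]| (i.e. the coefficient c_k^{I,v} of α_k^∨ in e_I − e_{v(I)} vanishes). -/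
namespace Perm55

open PermutohedronA

variable {n : ℕ} {K : Finset ℕ} {hK : ∀ k ∈ K, k + 1 < n}

/-- the orbit relation for the subgroup `SK`. -/
def rel (n : ℕ) (K : Finset ℕ) (hK : ∀ k ∈ K, k + 1 < n) (a b : Fin n) : Prop :=
  ∃ w ∈ SK n K hK, w a = b

lemma rel_refl (a : Fin n) : rel n K hK a a := ⟨1, one_mem _, rfl⟩

lemma rel_symm {a b : Fin n} (h : rel n K hK a b) : rel n K hK b a := by
  obtain ⟨w, hw, hwa⟩ := h
  exact ⟨w⁻¹, inv_mem hw, by simp [← hwa]⟩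

lemma rel_trans {a b c : Fin n} (h1 : rel n K hK a b) (h2 : rel n K hK b c) :
    rel n K hK a c := by
  obtain ⟨w, hw, hwa⟩ := h1
  obtain ⟨u, hu, hub⟩ := h2
  exact ⟨u * w, mul_mem hu hw, by simp [hwa, hub]⟩

lemma rel_apply {w : Equiv.Perm (Fin n)} (hw : w ∈ SK n K hK) (a : Fin n) :
    rel n K hK a (w a) := ⟨w, hw, rfl⟩

/-- `P a j` : every point between `a` and `j` is in the orbit of `a`. -/
def P (n : ℕ) (K : Finset ℕ) (hK : ∀ k ∈ K, k + 1 < n) (a j : Fin n) : Prop :=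
  ∀ m : Fin n, ((a : ℕ) ≤ m ∧ (m : ℕ) ≤ j) ∨ ((j : ℕ) ≤ m ∧ (m : ℕ) ≤ a) →
    rel n K hK a m

lemma P_rel {a j : Fin n} (h : P n K hK a j) : rel n K hK a j := by
  refine h j ?_
  rcases le_total (a : ℕ) (j : ℕ) with h' | h' <;> omega

lemma P_refl (a : Fin n) : P n K hK a a := by
  intro m hm
  have hma : m = a := Fin.ext (by omega)
  rw [hma]; exact rel_refl a

lemma gen_P {p : ℕ} (hp : p ∈ K) (a j : Fin n)
    (h : P n K hK a j) :
    P n K hK a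
      ((Equiv.swap (⟨p, Nat.lt_of_succ_lt (hK p hp)⟩ : Fin n) ⟨p + 1, hK p hp⟩) j) := by
  set x : Fin n := ⟨p, Nat.lt_of_succ_lt (hK p hp)⟩
  set y : Fin n := ⟨p + 1, hK p hp⟩
  set σ := Equiv.swap x y with hσ
  have hσmem : σ ∈ SK n K hK := Subgroup.subset_closure ⟨p, hp, rfl⟩
  have hrelaj : rel n K hK a j := P_rel h
  have hrelaσj : rel n K hK a (σ j) := rel_trans hrelaj (rel_apply hσmem j)
  intro m hm
  by_cases hmj : m = σ j
  · subst hmj; exact hrelaσj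
  · refine h m ?_
    have hv : (σ j : ℕ) = j ∨ ((j : ℕ) = p ∧ (σ j : ℕ) = p + 1) ∨
        ((j : ℕ) = p + 1 ∧ (σ j : ℕ) = p) := by
      rcases eq_or_ne j x with hjx | hjx
      · subst hjx; right; left; simp [hσ, Equiv.swap_apply_left, x, y]
      · rcases eq_or_ne j y with hjy | hjy
        · subst hjy; right; right; simp [hσ, Equiv.swap_apply_right, x, y]
        · left; rw [hσ, Equiv.swap_apply_of_ne_of_ne hjx hjy]
    have hmne : (m : ℕ) ≠ (σ j : ℕ) := fun hc => hmj (Fin.ext hc)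
    omega

lemma P_iff_of_mem {w : Equiv.Perm (Fin n)} (hw : w ∈ SK n K hK) :
    ∀ a j : Fin n, P n K hK a j ↔ P n K hK a (w j) := by
  refine Subgroup.closure_induction
    (p := fun w _ => ∀ a j : Fin n, P n K hK a j ↔ P n K hK a (w j)) ?_ ?_ ?_ ?_ hw
  · rintro σ ⟨p, hp, rfl⟩ a j
    constructor
    · exact gen_P hp a j
    · intro h
      have := gen_P hp a _ h
      rwa [Equiv.swap_apply_self] at this
  · intro a j; simp
  · intro w u _ _ hw hu a j
    rw [Equiv.Perm.mul_apply]
    exact (hu a j).trans (hw a (u j))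
  · intro w _ hw a j
    constructor
    · intro h
      have h2 := (hw a (w⁻¹ j)).mpr
      simp only [Equiv.Perm.coe_inv, Equiv.apply_symm_apply] at h2
      exact h2 h
    · intro h
      have h2 := (hw a (w⁻¹ j)).mp h
      simpa using h2

/-- Intervality: every point between `a` and `w a` is in the orbit of `a`. -/
lemma interval {w : Equiv.Perm (Fin n)} (hw : w ∈ SK n K hK) (a m : Fin n)
    (hm : ((a : ℕ) ≤ m ∧ (m : ℕ) ≤ (w a : ℕ)) ∨ ((w a : ℕ) ≤ m ∧ (m : ℕ) ≤ a)) :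
    rel n K hK a m :=
  ((P_iff_of_mem hw a a).mp (P_refl a)) m hm

end Perm55

namespace Perm55

open PermutohedronA

variable {n : ℕ} {K : Finset ℕ} {hK : ∀ k ∈ K, k + 1 < n}

/-- Generic: lower subsets of a linearly ordered finset are comparable by cardinality. -/
lemma lower_compare {α : Type*} [DecidableEq α] [LinearOrder α] {S A B : Finset α}
    (hA : A ⊆ S) (hB : B ⊆ S)
    (hlA : ∀ a ∈ S, ∀ b ∈ A, a ≤ b → a ∈ A)
    (hlB : ∀ a ∈ S, ∀ b ∈ B, a ≤ b → a ∈ B)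
    (hcard : A.card ≤ B.card) : A ⊆ B := by
  classical
  intro a ha
  by_contra hnB
  have h1 : B ⊆ S.filter (· < a) := by
    intro b hb
    rcases lt_or_ge b a with h | h
    · exact Finset.mem_filter.mpr ⟨hB hb, h⟩
    · exact absurd (hlB a (hA ha) b hb h) hnB
  have h2 : S.filter (· ≤ a) ⊆ A := by
    intro x hx
    obtain ⟨hxS, hxa⟩ := Finset.mem_filter.mp hx
    exact hlA x hxS a ha hxa
  have hsub : S.filter (· < a) ⊆ S.filter (· ≤ a) := by
    intro x hx
    obtain ⟨hxS, hxa⟩ := Finset.mem_filter.mp hx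
    exact Finset.mem_filter.mpr ⟨hxS, le_of_lt hxa⟩
  have h3 : S.filter (· < a) ⊂ S.filter (· ≤ a) := by
    refine (Finset.ssubset_iff_of_subset hsub).mpr ?_
    exact ⟨a, Finset.mem_filter.mpr ⟨hA ha, le_refl a⟩,
      fun hc => absurd (Finset.mem_filter.mp hc).2 (lt_irrefl a)⟩
  have := Finset.card_le_card h1
  have := Finset.card_lt_card h3
  have := Finset.card_le_card h2
  omega

/-- `I` is downward closed along each orbit. -/
lemma lower_in_orbit {I : Finset (Fin n)} (hIlow : lowerK n K hK I) (c : Fin n) :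
    ∀ d : ℕ, ∀ a b : Fin n, rel n K hK c a → rel n K hK c b →
      (b : ℕ) = (a : ℕ) + d → b ∈ I → a ∈ I := by
  intro d
  induction d with
  | zero =>
    intro a b _ _ hba hbI
    have : b = a := Fin.ext (by omega)
    rwa [this] at hbI
  | succ d ih =>
    intro a b ha hb hba hbI
    have hbn : (b : ℕ) < n := b.isLt
    set b' : Fin n := ⟨(b : ℕ) - 1, by omega⟩ with hb'def
    have hb'val : (b' : ℕ) = (b : ℕ) - 1 := rfl
    have hb' : rel n K hK c b' := by
      rcases le_or_gt (c : ℕ) (b' : ℕ) with h | h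
      · obtain ⟨w, hw, hwc⟩ := hb
        refine interval hw c b' (Or.inl ⟨h, ?_⟩)
        rw [hwc]; omega
      · obtain ⟨w, hw, hwa⟩ := rel_symm ha
        refine rel_trans ha (interval hw a b' (Or.inl ⟨by omega, ?_⟩))
        rw [hwa]; omega
    have hrelb'b : rel n K hK b' b := rel_trans (rel_symm hb') hb
    obtain ⟨w, hw, hwb'⟩ := hrelb'b
    have hk' : (b' : ℕ) + 1 < n := by omega
    have hb'eq : (⟨(b' : ℕ), Nat.lt_of_succ_lt hk'⟩ : Fin n) = b' := Fin.ext rfl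
    have hbeq : (⟨(b' : ℕ) + 1, hk'⟩ : Fin n) = b := by
      apply Fin.ext
      show (b' : ℕ) + 1 = (b : ℕ)
      omega
    have happ := hIlow (b' : ℕ) hk'
    rw [hb'eq, hbeq] at happ
    have hIb' : b' ∈ I := happ ⟨w, hw, hwb'⟩ hbI
    exact ih a b' ha hb' (by omega) hIb'

end Perm55

open PermutohedronA in
/-- Lemma 5.5: if `v(I) ∩ N ⊆ [k] ∩ N` or `v(I) ∩ N ⊇ [k] ∩ N`, where `N` is the
`𝔖_K`-orbit of `k`, then the coefficient `c_k^{I,v} = |I ∩ [k]| − |v(I) ∩ [k]|`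
of `α_k^∨` in `e_I − e_{v(I)}` vanishes. -/
theorem statement12 (n : ℕ) (hn : 2 ≤ n) (K : Finset ℕ) (hK : ∀ k ∈ K, k + 1 < n)
    (I : Finset (Fin n)) (hIne : I.Nonempty) (hIpr : I ≠ Finset.univ)
    (hIlow : lowerK n K hK I)
    (v : Equiv.Perm (Fin n)) (hv : v ∈ SK n K hK)
    (k : ℕ) (hk : k ∈ K)
    (N : Set (Fin n))
    (hN : N = {j | ∃ w ∈ SK n K hK, w ⟨k, Nat.lt_of_succ_lt (hK k hk)⟩ = j})
    (hcase :
      ((I.image v : Finset (Fin n)) : Set (Fin n)) ∩ N ⊆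
          {j : Fin n | (j : ℕ) ≤ k} ∩ N ∨
      {j : Fin n | (j : ℕ) ≤ k} ∩ N ⊆
          ((I.image v : Finset (Fin n)) : Set (Fin n)) ∩ N) :
    cnt n I k = cnt n (I.image v) k := by
  classical
  open Perm55 in
  set kf : Fin n := ⟨k, Nat.lt_of_succ_lt (hK k hk)⟩ with hkf
  set J : Finset (Fin n) := I.image v with hJ
  have hNR : ∀ j, j ∈ N ↔ Perm55.rel n K hK kf j := by
    intro j; rw [hN]; exact Iff.rfl
  have hkN : Perm55.rel n K hK kf kf := Perm55.rel_refl kf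
  -- splitting the count
  have hsplit : ∀ T : Finset (Fin n), cnt n T k =
      (T.filter (fun j : Fin n => (j : ℕ) ≤ k ∧ Perm55.rel n K hK kf j)).card +
      (T.filter (fun j : Fin n => (j : ℕ) ≤ k ∧ ¬ Perm55.rel n K hK kf j)).card := by
    intro T
    rw [cnt, ← Finset.filter_filter, ← Finset.filter_filter,
      Finset.card_filter_add_card_filter_not]
  -- off-orbit part
  have hoff : (I.filter (fun j : Fin n => (j : ℕ) ≤ k ∧ ¬ Perm55.rel n K hK kf j)).card =
      (J.filter (fun j : Fin n => (j : ℕ) ≤ k ∧ ¬ Perm55.rel n K hK kf j)).card := by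
    rw [← Finset.card_image_of_injective
      (I.filter (fun j : Fin n => (j : ℕ) ≤ k ∧ ¬ Perm55.rel n K hK kf j)) v.injective]
    congr 1
    ext x
    simp only [Finset.mem_image, Finset.mem_filter, hJ]
    constructor
    · rintro ⟨j, ⟨hjI, hjk, hjN⟩, rfl⟩
      refine ⟨⟨j, hjI, rfl⟩, ?_, ?_⟩
      · by_contra hgt
        push_neg at hgt
        have hrel : Perm55.rel n K hK j kf :=
          Perm55.interval hv j kf (Or.inl ⟨hjk, le_of_lt hgt⟩)
        exact hjN (Perm55.rel_symm hrel)
      · intro hc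
        have : Perm55.rel n K hK (v j) j := by
          have := Perm55.rel_apply (inv_mem hv) (v j)
          simpa using this
        exact hjN (Perm55.rel_trans hc this)
    · rintro ⟨⟨j, hjI, rfl⟩, hxk, hxN⟩
      refine ⟨j, ⟨hjI, ?_, ?_⟩, rfl⟩
      · by_contra hgt
        push_neg at hgt
        have hj' : (v⁻¹ (v j) : ℕ) = (j : ℕ) := by simp
        have hrel : Perm55.rel n K hK (v j) kf :=
          Perm55.interval (inv_mem hv) (v j) kf
            (Or.inl ⟨hxk, by rw [hj']; exact le_of_lt hgt⟩)
        exact hxN (Perm55.rel_symm hrel)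
      · intro hc
        exact hxN (Perm55.rel_trans hc (Perm55.rel_apply hv j))
  -- on-orbit: setup
  set S : Finset (Fin n) := Finset.univ.filter (fun j => Perm55.rel n K hK kf j) with hS
  set A : Finset (Fin n) := I.filter (fun j => Perm55.rel n K hK kf j) with hA
  set B : Finset (Fin n) :=
    Finset.univ.filter (fun j => Perm55.rel n K hK kf j ∧ (j : ℕ) ≤ k) with hB
  set C : Finset (Fin n) := J.filter (fun j => Perm55.rel n K hK kf j) with hC
  have hAC : A.card = C.card := by
    rw [← Finset.card_image_of_injective A v.injective]
    congr 1
    ext x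
    simp only [hA, hC, hJ, Finset.mem_image, Finset.mem_filter]
    constructor
    · rintro ⟨j, ⟨hjI, hr⟩, rfl⟩
      exact ⟨⟨j, hjI, rfl⟩, Perm55.rel_trans hr (Perm55.rel_apply hv j)⟩
    · rintro ⟨⟨j, hjI, rfl⟩, hr⟩
      have : Perm55.rel n K hK (v j) j := by
        have := Perm55.rel_apply (inv_mem hv) (v j)
        simpa using this
      exact ⟨j, ⟨hjI, Perm55.rel_trans hr this⟩, rfl⟩
  have hAS : A ⊆ S := by
    intro x hx
    exact Finset.mem_filter.mpr ⟨Finset.mem_univ x, (Finset.mem_filter.mp hx).2⟩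
  have hBS : B ⊆ S := by
    intro x hx
    exact Finset.mem_filter.mpr ⟨Finset.mem_univ x, (Finset.mem_filter.mp hx).2.1⟩
  have hlowA : ∀ a ∈ S, ∀ b ∈ A, a ≤ b → a ∈ A := by
    intro a haS b hbA hab
    have hra := (Finset.mem_filter.mp haS).2
    obtain ⟨hbI, hrb⟩ := Finset.mem_filter.mp hbA
    have hab' : (b : ℕ) = (a : ℕ) + ((b : ℕ) - (a : ℕ)) := by
      have := Fin.le_def.mp hab; omega
    exact Finset.mem_filter.mpr
      ⟨Perm55.lower_in_orbit hIlow kf ((b : ℕ) - (a : ℕ)) a b hra hrb hab' hbI, hra⟩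
  have hlowB : ∀ a ∈ S, ∀ b ∈ B, a ≤ b → a ∈ B := by
    intro a haS b hbB hab
    have hra := (Finset.mem_filter.mp haS).2
    obtain ⟨-, -, hbk⟩ := Finset.mem_filter.mp hbB
    exact Finset.mem_filter.mpr ⟨Finset.mem_univ a, hra,
      le_trans (Fin.le_def.mp hab) hbk⟩
  -- on-orbit part, by cases
  have hon : (I.filter (fun j : Fin n => (j : ℕ) ≤ k ∧ Perm55.rel n K hK kf j)).card =
      (J.filter (fun j : Fin n => (j : ℕ) ≤ k ∧ Perm55.rel n K hK kf j)).card := by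
    rcases hcase with hc | hc
    · -- v(I) ∩ N ⊆ [k] ∩ N
      have hc' : ∀ j, j ∈ J → Perm55.rel n K hK kf j → (j : ℕ) ≤ k := by
        intro j hjJ hr
        exact (hc ⟨Finset.mem_coe.mpr hjJ, (hNR j).mpr hr⟩).1
      have hCB : C ⊆ B := by
        intro x hx
        obtain ⟨hxJ, hr⟩ := Finset.mem_filter.mp hx
        exact Finset.mem_filter.mpr ⟨Finset.mem_univ x, hr, hc' x hxJ hr⟩
      have hAB : A ⊆ B :=
        Perm55.lower_compare hAS hBS hlowA hlowB
          (hAC ▸ Finset.card_le_card hCB)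
      have e1 : I.filter (fun j : Fin n => (j : ℕ) ≤ k ∧ Perm55.rel n K hK kf j) = A := by
        ext x
        simp only [hA, Finset.mem_filter]
        constructor
        · rintro ⟨hxI, -, hr⟩; exact ⟨hxI, hr⟩
        · rintro ⟨hxI, hr⟩
          have hxB := hAB (Finset.mem_filter.mpr ⟨hxI, hr⟩)
          exact ⟨hxI, (Finset.mem_filter.mp hxB).2.2, hr⟩
      have e2 : J.filter (fun j : Fin n => (j : ℕ) ≤ k ∧ Perm55.rel n K hK kf j) = C := by
        ext x
        simp only [hC, Finset.mem_filter]
        constructor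
        · rintro ⟨hxJ, -, hr⟩; exact ⟨hxJ, hr⟩
        · rintro ⟨hxJ, hr⟩; exact ⟨hxJ, hc' x hxJ hr, hr⟩
      rw [e1, e2, hAC]
    · -- [k] ∩ N ⊆ v(I) ∩ N
      have hc' : ∀ j : Fin n, (j : ℕ) ≤ k → Perm55.rel n K hK kf j → j ∈ J := by
        intro j hjk hr
        exact Finset.mem_coe.mp (hc ⟨hjk, (hNR j).mpr hr⟩).1
      have hBC : B ⊆ C := by
        intro x hx
        obtain ⟨-, hr, hxk⟩ := Finset.mem_filter.mp hx
        exact Finset.mem_filter.mpr ⟨hc' x hxk hr, hr⟩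
      have hBA : B ⊆ A :=
        Perm55.lower_compare hBS hAS hlowB hlowA
          (hAC ▸ Finset.card_le_card hBC)
      have e1 : I.filter (fun j : Fin n => (j : ℕ) ≤ k ∧ Perm55.rel n K hK kf j) = B := by
        ext x
        simp only [Finset.mem_filter, hB, Finset.mem_univ, true_and]
        constructor
        · rintro ⟨-, hxk, hr⟩; exact ⟨hr, hxk⟩
        · rintro ⟨hr, hxk⟩
          have hxA := hBA (Finset.mem_filter.mpr ⟨Finset.mem_univ x, hr, hxk⟩)
          exact ⟨(Finset.mem_filter.mp hxA).1, hxk, hr⟩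
      have e2 : J.filter (fun j : Fin n => (j : ℕ) ≤ k ∧ Perm55.rel n K hK kf j) = B := by
        ext x
        simp only [Finset.mem_filter, hB, Finset.mem_univ, true_and]
        constructor
        · rintro ⟨-, hxk, hr⟩; exact ⟨hr, hxk⟩
        · rintro ⟨hr, hxk⟩; exact ⟨hc' x hxk hr, hxk, hr⟩
      rw [e1, e2]
  rw [hsplit I, hsplit J, hoff, hon]
end

section
/- Proposition 5.6: Let φ : ℚ[x,y] → A = ℚ[τ]/(𝓘+𝓙) be the ℚ-algebra homomorphism determined by φ(x_I) = (image of) Σ_{J ∈ 𝔖_K·I} τ_J for I ∈ 𝔉_{A_{n−1}}(K), and φ(y_k) = (image of) Σ_{I∈𝔉_{A_{n−1}}(K)} Σ_{J ∈ 𝔖_K·I} (|I∩[k]| − |J∩[k]|) τ_J for k ∈ K, the inner sums running over the distinct subsets J in the 𝔖_K-orbit of I. Then the kernel of φ contains both ideals 𝓘(K) and 𝓙(K), i.e. 𝓘(K) + 𝓙(K) ⊆ ker φ. -/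
noncomputable section

open MvPolynomial

namespace PermutohedronA

/-- `𝔉_{A_{n-1}}`: the nonempty proper subsets of `[n]`. -/
abbrev FA (n : ℕ) := {I : Finset (Fin n) // I.Nonempty ∧ I ≠ Finset.univ}

/-- The action of a permutation `w` on `𝔉_{A_{n-1}}`, `I ↦ w(I)`. -/
def permFA (n : ℕ) (w : Equiv.Perm (Fin n)) (I : FA n) : FA n :=
  ⟨I.1.image w, I.2.1.image w, by
    intro h
    apply I.2.2
    have hc : (I.1.image w).card = I.1.card :=
      Finset.card_image_of_injective _ w.injective
    rw [h, Finset.card_univ] at hc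
    exact Finset.eq_univ_of_card _ hc.symm⟩

/-- The ideal `𝓙` generated by products `τ_I τ_J` for incomparable `I, J`. -/
def Jideal (n : ℕ) : Ideal (MvPolynomial (FA n) ℚ) :=
  Ideal.span {p | ∃ I J : FA n, ¬ I.1 ⊆ J.1 ∧ ¬ J.1 ⊆ I.1 ∧ p = X I * X J}

/-- The linear form `θ_j = Σ_I ([j ∈ I] − [j+1 ∈ I]) τ_I` (0-indexed `j`). -/
def theta (n : ℕ) (j : ℕ) (hj : j + 1 < n) : MvPolynomial (FA n) ℚ :=
  ∑ I : FA n,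
    (((if (⟨j, Nat.lt_of_succ_lt hj⟩ : Fin n) ∈ I.1 then (1 : ℚ) else 0) -
      (if (⟨j + 1, hj⟩ : Fin n) ∈ I.1 then (1 : ℚ) else 0)) • X I)

/-- The ideal `𝓘` generated by the linear forms `θ_j`, `j = 1, …, n-1`. -/
def Iideal (n : ℕ) : Ideal (MvPolynomial (FA n) ℚ) :=
  Ideal.span {p | ∃ j, ∃ hj : j + 1 < n, p = theta n j hj}

open scoped Classical in
/-- The orbit sum `[τ_I] = Σ_{J ∈ 𝔖_K · I} τ_J` (over the distinct members of
the `𝔖_K`-orbit of `I`). -/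
def orbitSum (n : ℕ) (K : Finset ℕ) (hK : ∀ k ∈ K, k + 1 < n) (I : FA n) :
    MvPolynomial (FA n) ℚ :=
  ∑ J ∈ Finset.univ.filter (fun J : FA n => ∃ w ∈ SK n K hK, permFA n w I = J), X J

end PermutohedronA

namespace PermutohedronA

/-- `𝔉_{A_{n-1}}(K)`: nonempty proper subsets satisfying the lower condition. -/
abbrev FAK (n : ℕ) (K : Finset ℕ) (hK : ∀ k ∈ K, k + 1 < n) :=
  {I : Finset (Fin n) // (I.Nonempty ∧ I ≠ Finset.univ) ∧ lowerK n K hK I}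

/-- The variables `x_I` (`I ∈ 𝔉_{A_{n-1}}(K)`) and `y_k` (`k ∈ K`). -/
abbrev VarK (n : ℕ) (K : Finset ℕ) (hK : ∀ k ∈ K, k + 1 < n) :=
  FAK n K hK ⊕ {k : ℕ // k ∈ K}

open MvPolynomial in
open scoped Classical in
/-- The linear form `η_j = Σ_{k ∈ K} c_{jk} y_k + Σ_I ([j∈I] − [j+1∈I]) x_I`,
with `c_{jk} = −2` if `j = k`, `1` if `|j − k| = 1`, `0` otherwise. -/
def etaK (n : ℕ) (K : Finset ℕ) (hK : ∀ k ∈ K, k + 1 < n)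
    (j : ℕ) (hj : j + 1 < n) : MvPolynomial (VarK n K hK) ℚ :=
  (∑ k : {k : ℕ // k ∈ K},
    ((if j = k.1 then (-2 : ℚ)
      else if j + 1 = k.1 ∨ k.1 + 1 = j then (1 : ℚ) else 0)) • X (Sum.inr k)) +
  ∑ I : FAK n K hK,
    (((if (⟨j, Nat.lt_of_succ_lt hj⟩ : Fin n) ∈ I.1 then (1 : ℚ) else 0) -
      (if (⟨j + 1, hj⟩ : Fin n) ∈ I.1 then (1 : ℚ) else 0)) • X (Sum.inl I))

open MvPolynomial in
/-- The ideal `𝓘(K)` generated by the `η_j`. -/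
def IKideal (n : ℕ) (K : Finset ℕ) (hK : ∀ k ∈ K, k + 1 < n) :
    Ideal (MvPolynomial (VarK n K hK) ℚ) :=
  Ideal.span {p | ∃ j, ∃ hj : j + 1 < n, p = etaK n K hK j hj}

open MvPolynomial in
/-- The ideal `𝓙(K)`: products `x_I x_J` for incomparable `I, J ∈ 𝔉(K)` and
products `x_I y_k` when `I` is not `s_k`-invariant. -/
def JKideal (n : ℕ) (K : Finset ℕ) (hK : ∀ k ∈ K, k + 1 < n) :
    Ideal (MvPolynomial (VarK n K hK) ℚ) :=
  Ideal.span
    {p | (∃ I J : FAK n K hK, ¬ I.1 ⊆ J.1 ∧ ¬ J.1 ⊆ I.1 ∧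
            p = X (Sum.inl I) * X (Sum.inl J)) ∨
         (∃ I : FAK n K hK, ∃ k : {k : ℕ // k ∈ K},
            ¬ (I.1.image (Equiv.swap ⟨k.1, Nat.lt_of_succ_lt (hK k.1 k.2)⟩
                ⟨k.1 + 1, hK k.1 k.2⟩) = I.1) ∧
            p = X (Sum.inl I) * X (Sum.inr k))}

end PermutohedronA

namespace PermutohedronA

open MvPolynomial in
open scoped Classical in
/-- The map on variables defining `φ : ℚ[x, y] → A`:
`x_I ↦ [τ_I]` and `y_k ↦ Σ_{I ∈ 𝔉(K)} Σ_{J ∈ 𝔖_K·I} c_k^{I,J} τ_J`, where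
`c_k^{I,J} = |I ∩ [k]| − |J ∩ [k]|`. -/
def phiMap (n : ℕ) (K : Finset ℕ) (hK : ∀ k ∈ K, k + 1 < n) :
    VarK n K hK → (MvPolynomial (FA n) ℚ ⧸ (Iideal n ⊔ Jideal n))
  | Sum.inl I => Ideal.Quotient.mk _ (orbitSum n K hK ⟨I.1, I.2.1⟩)
  | Sum.inr k => Ideal.Quotient.mk _
      (∑ I : FAK n K hK,
        ∑ J ∈ Finset.univ.filter
            (fun J : FA n => ∃ w ∈ SK n K hK, permFA n w ⟨I.1, I.2.1⟩ = J),
          ((((I.1.filter (fun i : Fin n => (i : ℕ) ≤ k.1)).card : ℚ) -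
            ((J.1.filter (fun i : Fin n => (i : ℕ) ≤ k.1)).card : ℚ)) • X J))

end PermutohedronA

namespace PermutohedronA
open Finset

variable (K : Finset ℕ)

lemma bB_aux (i : ℕ) : ∃ m, i + m ∉ K := by
  refine ⟨K.sup id + 1, fun h => ?_⟩
  have := Finset.le_sup (f := id) h
  simp only [id] at this; omega

/-- end of the block containing `i`: least `m ≥ i` with `m ∉ K`. -/
def bB (i : ℕ) : ℕ := i + Nat.find (bB_aux K i)

lemma aB_aux (i : ℕ) : ∃ m, i - m = 0 ∨ i - m - 1 ∉ K := ⟨i, Or.inl (by omega)⟩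

/-- start of the block containing `i`. -/
def aB (i : ℕ) : ℕ := i - Nat.find (aB_aux K i)

lemma bB_le (i : ℕ) : i ≤ bB K i := Nat.le_add_right _ _

lemma bB_notK (i : ℕ) : bB K i ∉ K := Nat.find_spec (bB_aux K i)

lemma bB_K {i j : ℕ} (h1 : i ≤ j) (h2 : j < bB K i) : j ∈ K := by
  by_contra h
  exact absurd (Nat.find_min (bB_aux K i) (m := j - i) (by unfold bB at h2; omega))
    (by simp only [not_not]; rwa [Nat.add_sub_cancel' h1])

lemma aB_le (i : ℕ) : aB K i ≤ i := Nat.sub_le _ _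

lemma aB_spec (i : ℕ) : aB K i = 0 ∨ aB K i - 1 ∉ K := Nat.find_spec (aB_aux K i)

lemma aB_K {i j : ℕ} (h1 : aB K i ≤ j) (h2 : j < i) : j ∈ K := by
  by_contra h
  have hf : Nat.find (aB_aux K i) ≤ i := Nat.find_min' _ (Or.inl (by omega))
  have := Nat.find_min (aB_aux K i) (m := i - j - 1) (by unfold aB at h1; omega)
  push_neg at this
  exact absurd (by simpa [show i - (i - j - 1) - 1 = j by omega] using this.2) h

lemma bB_eq {i c : ℕ} (h1 : i ≤ c) (h2 : c ∉ K) (h3 : ∀ x, i ≤ x → x < c → x ∈ K) :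
    bB K i = c := by
  have hle : bB K i ≤ c := by
    have := Nat.find_min' (bB_aux K i) (m := c - i) (by rwa [Nat.add_sub_cancel' h1])
    unfold bB; omega
  rcases Nat.lt_or_ge (bB K i) c with h | h
  · exact absurd (h3 _ (bB_le K i) h) (bB_notK K i)
  · omega

lemma aB_eq {i c : ℕ} (h1 : c ≤ i) (h2 : c = 0 ∨ c - 1 ∉ K)
    (h3 : ∀ x, c ≤ x → x < i → x ∈ K) : aB K i = c := by
  have hge : c ≤ aB K i := by
    have := Nat.find_min' (aB_aux K i) (m := i - c)
      (by rcases h2 with h | h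
          · exact Or.inl (by omega)
          · exact Or.inr (by rwa [show i - (i-c) - 1 = c - 1 by omega]))
    unfold aB; omega
  rcases Nat.lt_or_ge c (aB K i) with h | h
  · rcases aB_spec K i with h0 | h0
    · omega
    · exact absurd (h3 _ (by omega) (by have := aB_le K i; omega)) h0
  · omega

lemma blk_interior {k x : ℕ} (h1 : aB K k ≤ x) (h2 : x < bB K k) : x ∈ K := by
  rcases Nat.lt_or_ge x k with h | h
  · exact aB_K K h1 h
  · exact bB_K K h h2

lemma blk_const {k j : ℕ} (h1 : aB K k ≤ j) (h2 : j ≤ bB K k) :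
    aB K j = aB K k ∧ bB K j = bB K k := by
  constructor
  · exact aB_eq K h1 (aB_spec K k)
      (fun x hx1 hx2 => blk_interior K hx1 (by omega))
  · exact bB_eq K h2 (bB_notK K k)
      (fun x hx1 hx2 => blk_interior K (by omega) hx2)

lemma bB_lt {n i : ℕ} (hK : ∀ k ∈ K, k + 1 < n) (h : i < n) : bB K i < n := by
  rcases Nat.lt_or_ge (i+1) n with h1 | h1
  · have hn : n - 1 ∉ K := fun hc => by have := hK _ hc; omega
    have : bB K i ≤ n - 1 := by
      have := Nat.find_min' (bB_aux K i) (m := n - 1 - i) (by rwa [Nat.add_sub_cancel' (by omega)])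
      unfold bB; omega
    omega
  · -- i = n - 1, i ∉ K
    have : i ∉ K := fun hc => by have := hK _ hc; omega
    have : bB K i = i := bB_eq K le_rfl this (by omega)
    omega

end PermutohedronA
namespace PermutohedronA
open Finset

open scoped Classical

section
variable (n : ℕ) (K : Finset ℕ) (hK : ∀ k ∈ K, k + 1 < n)

/-- the interval `[a,b]` inside `Fin n`. -/
def Iset (a b : ℕ) : Finset (Fin n) := univ.filter fun i : Fin n => a ≤ (i : ℕ) ∧ (i : ℕ) ≤ b

/-- the block (`𝔖_K`-orbit) containing `k`. -/
def Blk (k : ℕ) : Finset (Fin n) := Iset n (aB K k) (bB K k)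

/-- `|M ∩ [0,k]|`. -/
def gN (M : Finset (Fin n)) (k : ℕ) : ℕ := (M.filter fun i : Fin n => (i : ℕ) ≤ k).card

/-- `|M ∩ Blk k|`. -/
def cB (M : Finset (Fin n)) (k : ℕ) : ℕ := (M ∩ Blk n K k).card

lemma image_eq_of_maps (σ : Equiv.Perm (Fin n)) (S : Finset (Fin n))
    (h : ∀ x ∈ S, σ x ∈ S) : S.image ⇑σ = S :=
  Finset.eq_of_subset_of_card_le
    (fun y hy => by obtain ⟨x, hx, rfl⟩ := Finset.mem_image.1 hy; exact h x hx)
    (by rw [Finset.card_image_of_injective _ σ.injective])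

lemma SK_maps (S : Finset (Fin n))
    (hS : ∀ m (hm : m ∈ K), ∀ x ∈ S,
      Equiv.swap (⟨m, Nat.lt_of_succ_lt (hK m hm)⟩ : Fin n) ⟨m + 1, hK m hm⟩ x ∈ S) :
    ∀ w ∈ SK n K hK, S.image ⇑w = S := by
  intro w hw
  induction hw using Subgroup.closure_induction with
  | mem x hx => obtain ⟨m, hm, rfl⟩ := hx; exact image_eq_of_maps n _ S (hS m hm)
  | one => rw [Equiv.Perm.coe_one, Finset.image_id]
  | mul x y hx hy ihx ihy => rw [Equiv.Perm.coe_mul, ← Finset.image_image, ihy, ihx]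
  | inv x hx ih =>
      conv_lhs => rw [← ih]
      rw [Finset.image_image]
      have hcomp : ⇑x⁻¹ ∘ ⇑x = id := by funext y; simp
      rw [hcomp, Finset.image_id]

lemma Iset0_inv {k : ℕ} (hk : k ∉ K) : ∀ w ∈ SK n K hK, (Iset n 0 k).image ⇑w = Iset n 0 k := by
  refine SK_maps n K hK _ (fun m hm x hx => ?_)
  have hmk : m ≠ k := fun e => hk (e ▸ hm)
  simp only [Iset, mem_filter, mem_univ, true_and] at hx ⊢
  rw [Equiv.swap_apply_def]
  split_ifs with h1 h2
  · subst h1; simp only [Fin.val_mk] at hx ⊢; omega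
  · subst h2; simp only [Fin.val_mk] at hx ⊢; omega
  · exact hx

lemma Blk_inv (k : ℕ) : ∀ w ∈ SK n K hK, (Blk n K k).image ⇑w = Blk n K k := by
  refine SK_maps n K hK _ (fun m hm x hx => ?_)
  simp only [Blk, Iset, mem_filter, mem_univ, true_and] at hx ⊢
  rw [Equiv.swap_apply_def]
  split_ifs with h1 h2
  · subst h1
    simp only [Fin.val_mk] at hx ⊢
    have hmb : m ≠ bB K k := fun e => (bB_notK K k) (e ▸ hm)
    omega
  · subst h2
    simp only [Fin.val_mk] at hx ⊢
    have hma : m + 1 ≠ aB K k := by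
      intro e
      rcases aB_spec K k with h0 | h0
      · omega
      · have : aB K k - 1 = m := by omega
        exact h0 (this ▸ hm)
    omega
  · exact hx

lemma filter_le_eq_inter (M : Finset (Fin n)) (k : ℕ) :
    M.filter (fun i : Fin n => (i : ℕ) ≤ k) = M ∩ Iset n 0 k := by
  ext x
  simp only [Finset.mem_inter, Iset, Finset.mem_filter, mem_univ, true_and]
  exact ⟨fun ⟨h1, h2⟩ => ⟨h1, Nat.zero_le _, h2⟩, fun ⟨h1, _, h2⟩ => ⟨h1, h2⟩⟩

lemma gN_inv {k : ℕ} (hk : k ∉ K) {w} (hw : w ∈ SK n K hK) (M : Finset (Fin n)) :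
    gN n (M.image ⇑w) k = gN n M k := by
  have h1 : M.image ⇑w ∩ Iset n 0 k = (M ∩ Iset n 0 k).image ⇑w := by
    rw [Finset.image_inter _ _ w.injective, Iset0_inv n K hK hk w hw]
  unfold gN
  rw [filter_le_eq_inter, filter_le_eq_inter, h1, Finset.card_image_of_injective _ w.injective]

lemma cB_inv {w} (hw : w ∈ SK n K hK) (M : Finset (Fin n)) (k : ℕ) :
    cB n K (M.image ⇑w) k = cB n K M k := by
  have h1 : M.image ⇑w ∩ Blk n K k = (M ∩ Blk n K k).image ⇑w := by
    rw [Finset.image_inter _ _ w.injective, Blk_inv n K hK k w hw]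
  unfold cB
  rw [h1, Finset.card_image_of_injective _ w.injective]

/-- simplified form of the `𝔉(K)`-condition. -/
def lower (I : Finset (Fin n)) : Prop :=
  ∀ m (hm : m ∈ K), (⟨m + 1, hK m hm⟩ : Fin n) ∈ I →
    (⟨m, Nat.lt_of_succ_lt (hK m hm)⟩ : Fin n) ∈ I

lemma lowerK_iff (I : Finset (Fin n)) : lowerK n K hK I ↔ lower n K hK I := by
  constructor
  · intro h m hm
    exact h m (hK m hm)
      ⟨Equiv.swap ⟨m, Nat.lt_of_succ_lt (hK m hm)⟩ ⟨m + 1, hK m hm⟩,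
        Subgroup.subset_closure ⟨m, hm, rfl⟩, Equiv.swap_apply_left _ _⟩
  · rintro h k hk ⟨w, hw, hwk⟩ hmem
    have hkK : k ∈ K := by
      by_contra hkK
      have hiv := Iset0_inv n K hK hkK w hw
      have hmm : w ⟨k, Nat.lt_of_succ_lt hk⟩ ∈ (Iset n 0 k).image ⇑w :=
        Finset.mem_image_of_mem _ (by simp [Iset])
      rw [hiv, hwk] at hmm
      simp [Iset] at hmm
    exact h k hkK hmem

lemma lower_seg_aux {I : Finset (Fin n)} (hI : lower n K hK I) :
    ∀ d p q (h : p + d = q) (hq : q < n),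
      (∀ x, p ≤ x → x < q → x ∈ K) → (⟨q, hq⟩ : Fin n) ∈ I →
      (⟨p, by omega⟩ : Fin n) ∈ I := by
  intro d
  induction d with
  | zero =>
    intro p q h hq hrun hm
    obtain rfl : p = q := by omega
    exact hm
  | succ d ih =>
    intro p q h hq hrun hm
    have hpK : p ∈ K := hrun p le_rfl (by omega)
    have h2 := ih (p + 1) q (by omega) hq (fun x hx1 hx2 => hrun x (by omega) hx2) hm
    exact hI p hpK h2

lemma lower_seg {I : Finset (Fin n)} (hI : lower n K hK I) {p q : ℕ} (hpq : p ≤ q)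
    (hq : q < n) (hrun : ∀ x, p ≤ x → x < q → x ∈ K) (hm : (⟨q, hq⟩ : Fin n) ∈ I)
    (hp : p < n) : (⟨p, hp⟩ : Fin n) ∈ I :=
  lower_seg_aux n K hK hI (q - p) p q (by omega) hq hrun hm

lemma card_IsetLt {a b : ℕ} (hb : b ≤ n) :
    (univ.filter (fun q : Fin n => a ≤ (q : ℕ) ∧ (q : ℕ) < b)).card = b - a := by
  have himg : (univ.filter (fun q : Fin n => a ≤ (q : ℕ) ∧ (q : ℕ) < b)).image
      (fun i : Fin n => (i : ℕ)) = Finset.Ico a b := by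
    ext x
    simp only [Finset.mem_image, Finset.mem_filter, Finset.mem_univ, true_and, Finset.mem_Ico]
    constructor
    · rintro ⟨i, hi, rfl⟩; exact hi
    · rintro ⟨h1, h2⟩; exact ⟨⟨x, by omega⟩, ⟨h1, h2⟩, rfl⟩
  rw [← Nat.card_Ico a b, ← himg, Finset.card_image_of_injective _ Fin.val_injective]

lemma card_Iset {a b : ℕ} (hb : b < n) : (Iset n a b).card = b + 1 - a := by
  have : Iset n a b = univ.filter (fun q : Fin n => a ≤ (q : ℕ) ∧ (q : ℕ) < b + 1) := by
    ext x; simp only [Iset, mem_filter, mem_univ, true_and]; omega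
  rw [this, card_IsetLt n (by omega)]

lemma mem_of_card_blk {I : Finset (Fin n)} (hI : lower n K hK I) {k : ℕ} (i : Fin n)
    (ha : aB K k ≤ (i : ℕ)) (hb : (i : ℕ) ≤ bB K k)
    (hc : (i : ℕ) - aB K k + 1 ≤ cB n K I k) : i ∈ I := by
  by_contra hi
  have hsub : I ∩ Blk n K k ⊆
      univ.filter (fun q : Fin n => aB K k ≤ (q : ℕ) ∧ (q : ℕ) < (i : ℕ)) := by
    intro q hq
    simp only [Finset.mem_inter, Blk, Iset, mem_filter, mem_univ, true_and] at hq ⊢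
    obtain ⟨hqI, hq1, hq2⟩ := hq
    refine ⟨hq1, ?_⟩
    by_contra hlt
    push_neg at hlt
    have hmem : (⟨(i : ℕ), i.isLt⟩ : Fin n) ∈ I := by
      refine lower_seg n K hK hI hlt q.isLt
        (fun x hx1 hx2 => blk_interior K (k := k) (by omega) (by omega)) ?_ i.isLt
      exact hqI
    exact hi hmem
  have h2 := Finset.card_le_card hsub
  rw [card_IsetLt n (le_of_lt i.isLt)] at h2
  unfold cB at hc
  omega

lemma subset_of_cB_le {I J : Finset (Fin n)} (hI : lower n K hK I) (hJ : lower n K hK J)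
    (h : ∀ k, cB n K I k ≤ cB n K J k) : I ⊆ J := by
  intro i hi
  have hIseg : Iset n (aB K (i : ℕ)) (i : ℕ) ⊆ I ∩ Blk n K (i : ℕ) := by
    intro q hq
    simp only [Iset, mem_filter, mem_univ, true_and] at hq
    obtain ⟨h1, h2⟩ := hq
    rw [Finset.mem_inter]
    constructor
    · have := lower_seg n K hK hI h2 i.isLt
        (fun x hx1 hx2 => blk_interior K (k := (i : ℕ)) (by omega)
          (by have := bB_le K (i : ℕ); omega)) hi q.isLt
      simpa using this
    · simp only [Blk, Iset, mem_filter, mem_univ, true_and]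
      exact ⟨h1, le_trans h2 (bB_le K _)⟩
  have h1 : (i : ℕ) - aB K (i : ℕ) + 1 ≤ cB n K I (i : ℕ) := by
    have hcc := Finset.card_le_card hIseg
    rw [card_Iset n i.isLt] at hcc
    have := aB_le K (i : ℕ)
    unfold cB
    omega
  exact mem_of_card_blk n K hK hJ i (aB_le K _) (bB_le K _) (le_trans h1 (h _))

end
end PermutohedronA
namespace PermutohedronA
open Finset
open scoped Classical

section
variable (n : ℕ) (K : Finset ℕ) (hK : ∀ k ∈ K, k + 1 < n)

lemma exists_rep_aux : ∀ s (M : Finset (Fin n)), (M.sum fun i => (i : ℕ)) ≤ s →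
    ∃ w ∈ SK n K hK, lower n K hK (M.image ⇑w) := by
  intro s
  induction s with
  | zero =>
    intro M hs
    refine ⟨1, one_mem _, ?_⟩
    rw [Equiv.Perm.coe_one, Finset.image_id]
    intro m hm hmem
    have := Finset.single_le_sum (f := fun i : Fin n => (i : ℕ)) (fun i _ => Nat.zero_le _) hmem
    simp only [Fin.val_mk] at this
    omega
  | succ s ih =>
    intro M hs
    by_cases hM : lower n K hK M
    · exact ⟨1, one_mem _, by rwa [Equiv.Perm.coe_one, Finset.image_id]⟩
    · simp only [lower] at hM
      push_neg at hM
      obtain ⟨m, hm, hmem, hnmem⟩ := hM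
      set σ := Equiv.swap (⟨m, Nat.lt_of_succ_lt (hK m hm)⟩ : Fin n) ⟨m + 1, hK m hm⟩ with hσ
      have hσK : σ ∈ SK n K hK := Subgroup.subset_closure ⟨m, hm, rfl⟩
      have hlt : ((M.image ⇑σ).sum fun i => (i : ℕ)) < M.sum fun i => (i : ℕ) := by
        rw [Finset.sum_image (fun x _ y _ h => σ.injective h)]
        refine Finset.sum_lt_sum (fun i hi => ?_) ⟨_, hmem, ?_⟩
        · rw [hσ, Equiv.swap_apply_def]
          split_ifs with h1 h2
          · exact absurd (h1 ▸ hi) hnmem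
          · subst h2; simp
          · exact le_rfl
        · rw [hσ, Equiv.swap_apply_right]
          simp
      obtain ⟨w', hw', hlow⟩ := ih (M.image ⇑σ) (by omega)
      refine ⟨w' * σ, mul_mem hw' hσK, ?_⟩
      rwa [Equiv.Perm.coe_mul, ← Finset.image_image]

lemma exists_rep (M : Finset (Fin n)) : ∃ w ∈ SK n K hK, lower n K hK (M.image ⇑w) :=
  exists_rep_aux n K hK _ M le_rfl

/-- a chosen permutation sorting `M` into its lower representative. -/
def repw (M : Finset (Fin n)) : Equiv.Perm (Fin n) := (exists_rep n K hK M).choose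

lemma repw_mem (M : Finset (Fin n)) : repw n K hK M ∈ SK n K hK :=
  (exists_rep n K hK M).choose_spec.1

lemma repw_lower (M : Finset (Fin n)) : lower n K hK (M.image ⇑(repw n K hK M)) :=
  (exists_rep n K hK M).choose_spec.2

lemma lower_orbit_eq {I : Finset (Fin n)} (hI : lower n K hK I) {w} (hw : w ∈ SK n K hK)
    (hJ : lower n K hK (I.image ⇑w)) : I.image ⇑w = I := by
  have hcb : ∀ k, cB n K (I.image ⇑w) k = cB n K I k := fun k => cB_inv n K hK hw I k
  exact subset_antisymm (subset_of_cB_le n K hK hJ hI (fun k => (hcb k).le))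
    (subset_of_cB_le n K hK hI hJ (fun k => (hcb k).ge))

/-- the lower representative of the orbit of `J`, as an element of `𝔉(K)`. -/
def Rep (J : FA n) : FAK n K hK :=
  ⟨(permFA n (repw n K hK J.1) J).1, (permFA n (repw n K hK J.1) J).2,
    (lowerK_iff n K hK _).2 (repw_lower n K hK J.1)⟩

lemma Rep_val (J : FA n) : (Rep n K hK J).1 = J.1.image ⇑(repw n K hK J.1) := rfl

lemma fiber_eq (I : FAK n K hK) (J : FA n) :
    (∃ w ∈ SK n K hK, permFA n w ⟨I.1, I.2.1⟩ = J) ↔ Rep n K hK J = I := by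
  constructor
  · rintro ⟨w, hw, rfl⟩
    apply Subtype.ext
    rw [Rep_val]
    show (I.1.image ⇑w).image ⇑(repw n K hK _) = I.1
    rw [Finset.image_image, ← Equiv.Perm.coe_mul]
    exact lower_orbit_eq n K hK ((lowerK_iff n K hK _).1 I.2.2)
      (mul_mem (repw_mem n K hK _) hw)
      (by
        rw [Equiv.Perm.coe_mul, ← Finset.image_image]
        exact repw_lower n K hK _)
  · rintro rfl
    refine ⟨(repw n K hK J.1)⁻¹, inv_mem (repw_mem n K hK J.1), ?_⟩
    apply Subtype.ext
    show ((Rep n K hK J).1).image ⇑(repw n K hK J.1)⁻¹ = J.1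
    rw [Rep_val, Finset.image_image]
    have hcomp : ⇑(repw n K hK J.1)⁻¹ ∘ ⇑(repw n K hK J.1) = id := by funext y; simp
    rw [hcomp, Finset.image_id]

lemma sum_orbit {β : Type*} [AddCommMonoid β] (f : FA n → β) :
    ∑ I : FAK n K hK, ∑ J ∈ Finset.univ.filter
      (fun J : FA n => ∃ w ∈ SK n K hK, permFA n w ⟨I.1, I.2.1⟩ = J), f J
      = ∑ J : FA n, f J := by
  rw [← Finset.sum_fiberwise Finset.univ (Rep n K hK) f]
  refine Finset.sum_congr rfl (fun I _ => ?_)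
  refine Finset.sum_congr (Finset.filter_congr (fun J _ => ?_)) (fun _ _ => rfl)
  exact ⟨fun h => (fiber_eq n K hK I J).1 h, fun h => (fiber_eq n K hK I J).2 h⟩

/-- within the fiber of `I`, `J` is an image of `I` by some `w ∈ 𝔖_K`. -/
lemma fiber_wit {I : FAK n K hK} {J : FA n} (h : Rep n K hK J = I) :
    ∃ w ∈ SK n K hK, J.1 = I.1.image ⇑w := by
  obtain ⟨w, hw, he⟩ := (fiber_eq n K hK I J).2 h
  exact ⟨w, hw, by rw [← he]; rfl⟩

end
end PermutohedronA
namespace PermutohedronA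
open Finset
open scoped Classical

section
variable (n : ℕ) (K : Finset ℕ) (hK : ∀ k ∈ K, k + 1 < n)

/-- indicator of `j ∈ M`, as a rational. -/
def chiq (M : Finset (Fin n)) (j : ℕ) : ℚ :=
  if h : j < n then (if (⟨j, h⟩ : Fin n) ∈ M then 1 else 0) else 0

lemma chiq_eq {j : ℕ} (h : j < n) (M : Finset (Fin n)) :
    chiq n M j = if (⟨j, h⟩ : Fin n) ∈ M then 1 else 0 := dif_pos h

lemma gN_succ (M : Finset (Fin n)) {j : ℕ} (hj : j + 1 < n) :
    gN n M (j + 1) = gN n M j + (if (⟨j + 1, hj⟩ : Fin n) ∈ M then 1 else 0) := by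
  unfold gN
  have hp : ∀ i ∈ M, ((i : ℕ) ≤ j + 1) ↔ ((i : ℕ) ≤ j ∨ i = ⟨j + 1, hj⟩) := by
    intro i _
    rw [Fin.ext_iff]
    simp only [Fin.val_mk]
    omega
  rw [Finset.filter_congr hp, Finset.filter_or, Finset.card_union_of_disjoint, Finset.filter_eq']
  · split_ifs <;> simp
  · rw [Finset.disjoint_left]
    intro x hx hx'
    simp only [mem_filter] at hx hx'
    rw [hx'.2] at hx
    simp only [Fin.val_mk] at hx
    omega

lemma gN_zero (M : Finset (Fin n)) (h0 : 0 < n) :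
    gN n M 0 = if (⟨0, h0⟩ : Fin n) ∈ M then 1 else 0 := by
  unfold gN
  have hp : ∀ i ∈ M, ((i : ℕ) ≤ 0) ↔ (i = ⟨0, h0⟩) := by
    intro i _
    rw [Fin.ext_iff]
    simp only [Fin.val_mk]
    omega
  rw [Finset.filter_congr hp, Finset.filter_eq']
  split_ifs <;> simp

lemma gN_succ_q (M : Finset (Fin n)) {j : ℕ} (hj : j + 1 < n) :
    (gN n M (j + 1) : ℚ) = gN n M j + chiq n M (j + 1) := by
  rw [gN_succ n M hj, chiq_eq n hj]
  push_cast
  split_ifs <;> norm_num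

lemma gN_zero_q (M : Finset (Fin n)) (h0 : 0 < n) :
    (gN n M 0 : ℚ) = chiq n M 0 := by
  rw [gN_zero n M h0, chiq_eq n h0]
  split_ifs <;> norm_num

include hK in
/-- Fact A: the key scalar identity for `η_j`. -/
lemma factA {I J : Finset (Fin n)} (hIJ : ∀ k, k ∉ K → gN n I k = gN n J k)
    {j : ℕ} (hj : j + 1 < n) :
    (∑ k ∈ K.attach,
      (if j = (k : ℕ) then (-2 : ℚ) else if j + 1 = (k : ℕ) ∨ (k : ℕ) + 1 = j then 1 else 0) *
        ((gN n I (k : ℕ) : ℚ) - (gN n J (k : ℕ) : ℚ)))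
      = (chiq n J j - chiq n J (j + 1)) - (chiq n I j - chiq n I (j + 1)) := by
  set d : ℕ → ℚ := fun k => (gN n I k : ℚ) - (gN n J k : ℚ) with hd
  have hd0 : ∀ k, k ∉ K → d k = 0 := fun k hk => by simp [hd, hIJ k hk]
  have hKr : K ⊆ Finset.range n := fun k hk => Finset.mem_range.2 (by have := hK k hk; omega)
  have hstep : ∑ k ∈ K.attach,
      (if j = (k : ℕ) then (-2 : ℚ) else if j + 1 = (k : ℕ) ∨ (k : ℕ) + 1 = j then 1 else 0) * d (k : ℕ)
      = ∑ k ∈ Finset.range n,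
      (if j = k then (-2 : ℚ) else if j + 1 = k ∨ k + 1 = j then 1 else 0) * d k := by
    rw [Finset.sum_attach K (fun k =>
      (if j = k then (-2 : ℚ) else if j + 1 = k ∨ k + 1 = j then 1 else 0) * d k)]
    exact Finset.sum_subset hKr (fun x _ hx => by rw [hd0 x hx, mul_zero])
  rw [hstep]
  have hsplit : ∀ k, (if j = k then (-2 : ℚ) else if j + 1 = k ∨ k + 1 = j then 1 else 0) * d k
      = (if k = j then (-2) * d k else 0) + (if k = j + 1 then d k else 0) +
        (if k = j - 1 ∧ 1 ≤ j then d k else 0) := by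
    intro k
    split_ifs <;> try ring
    all_goals exfalso; omega
  rw [Finset.sum_congr rfl (fun k _ => hsplit k)]
  rw [Finset.sum_add_distrib, Finset.sum_add_distrib]
  rw [Finset.sum_ite_eq' (Finset.range n) j (fun k => (-2 : ℚ) * d k),
    Finset.sum_ite_eq' (Finset.range n) (j + 1) (fun k => d k)]
  rw [if_pos (Finset.mem_range.2 (by omega)), if_pos (Finset.mem_range.2 hj)]
  rcases Nat.eq_zero_or_pos j with rfl | hj1
  · have h3 : ∑ k ∈ Finset.range n, (if k = 0 - 1 ∧ 1 ≤ 0 then d k else 0) = 0 :=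
      Finset.sum_eq_zero (fun k _ => by simp)
    rw [h3]
    have e1 : d 1 = d 0 + (chiq n I 1 - chiq n J 1) := by
      simp only [hd]
      rw [show (1 : ℕ) = 0 + 1 by rfl, gN_succ_q n I hj, gN_succ_q n J hj]
      ring
    have e0 : d 0 = chiq n I 0 - chiq n J 0 := by
      simp only [hd]
      rw [gN_zero_q n I (by omega), gN_zero_q n J (by omega)]
    rw [e1, e0]
    ring
  · have h3 : ∑ k ∈ Finset.range n, (if k = j - 1 ∧ 1 ≤ j then d k else 0)
        = ∑ k ∈ Finset.range n, (if k = j - 1 then d k else 0) :=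
      Finset.sum_congr rfl (fun k _ => by
        split_ifs <;> first | rfl | omega)
    rw [h3, Finset.sum_ite_eq' (Finset.range n) (j - 1) (fun k => d k),
      if_pos (Finset.mem_range.2 (by omega))]
    have e1 : d (j + 1) = d j + (chiq n I (j + 1) - chiq n J (j + 1)) := by
      simp only [hd]
      rw [gN_succ_q n I hj, gN_succ_q n J hj]
      ring
    have e2 : d j = d (j - 1) + (chiq n I j - chiq n J j) := by
      simp only [hd]
      have hjj : (j - 1) + 1 = j := by omega
      have hjn : (j - 1) + 1 < n := by omega
      calc (gN n I j : ℚ) - gN n J j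
        = (gN n I ((j-1)+1) : ℚ) - gN n J ((j-1)+1) := by rw [hjj]
        _ = d (j - 1) + (chiq n I ((j-1)+1) - chiq n J ((j-1)+1)) := by
            rw [gN_succ_q n I hjn, gN_succ_q n J hjn]; simp only [hd]; ring
        _ = d (j - 1) + (chiq n I j - chiq n J j) := by rw [hjj]
    rw [e1, e2]
    ring

/-- telescoping: combinations of the `θ_j` coefficients realize any mean-zero weight. -/
lemma tele (b : ℕ → ℚ) (hn0 : 1 ≤ n) (hb : ∑ i ∈ Finset.range n, b i = 0)
    (M : Finset (Fin n)) :
    ∑ j ∈ Finset.range (n - 1), (∑ i ∈ Finset.range (j + 1), b i) *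
      (chiq n M j - chiq n M (j + 1)) = ∑ i ∈ M, b (i : ℕ) := by
  have key : ∀ m, ∑ j ∈ range m, (∑ i ∈ range (j + 1), b i) * (chiq n M j - chiq n M (j + 1))
      = (∑ j ∈ range m, b j * chiq n M j) - (∑ i ∈ range m, b i) * chiq n M m := by
    intro m
    induction m with
    | zero => simp
    | succ m ih =>
      rw [Finset.sum_range_succ, ih, Finset.sum_range_succ (f := fun j => b j * chiq n M j),
        Finset.sum_range_succ (f := fun i => b i)]
      ring
  rw [key (n - 1)]
  have h1 : ∑ i ∈ range (n - 1), b i = - b (n - 1) := by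
    have hr : range n = range ((n - 1) + 1) := by rw [Nat.sub_add_cancel hn0]
    rw [hr, Finset.sum_range_succ] at hb
    linarith
  rw [h1]
  have h3 : ∑ j ∈ range n, b j * chiq n M j = ∑ i ∈ M, b (i : ℕ) := by
    rw [← Fin.sum_univ_eq_sum_range (fun j => b j * chiq n M j) n]
    have he : ∀ i : Fin n, b (i : ℕ) * chiq n M (i : ℕ) = if i ∈ M then b (i : ℕ) else 0 := by
      intro i
      rw [chiq_eq n i.isLt]
      have : (⟨(i : ℕ), i.isLt⟩ : Fin n) = i := rfl
      rw [this]
      split_ifs <;> ring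
    rw [Finset.sum_congr rfl (fun i _ => he i), Finset.sum_ite_mem, Finset.univ_inter]
  have h2 : ∑ j ∈ range n, b j * chiq n M j
      = (∑ j ∈ range (n - 1), b j * chiq n M j) + b (n - 1) * chiq n M (n - 1) := by
    have hs := Finset.sum_range_succ (fun j => b j * chiq n M j) (n - 1)
    rwa [Nat.sub_add_cancel hn0] at hs
  rw [h3] at h2
  linarith

end
end PermutohedronA
namespace PermutohedronA
open Finset
open scoped Classical

section
variable (n : ℕ) (K : Finset ℕ) (hK : ∀ k ∈ K, k + 1 < n)

include hK in
/-- Fact B: images of incomparable lower sets stay incomparable. -/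
lemma factB {I J : Finset (Fin n)} (hI : lower n K hK I) (hJ : lower n K hK J)
    (hIJ : ¬ I ⊆ J) {w1 w2 : Equiv.Perm (Fin n)} (h1 : w1 ∈ SK n K hK)
    (h2 : w2 ∈ SK n K hK) : ¬ (I.image ⇑w1 ⊆ J.image ⇑w2) := by
  intro hsub
  apply hIJ
  refine subset_of_cB_le n K hK hI hJ (fun k => ?_)
  calc cB n K I k = cB n K (I.image ⇑w1) k := (cB_inv n K hK h1 I k).symm
    _ ≤ cB n K (J.image ⇑w2) k :=
        Finset.card_le_card (Finset.inter_subset_inter hsub Finset.Subset.rfl)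
    _ = cB n K J k := cB_inv n K hK h2 J k

lemma swap_image_eq {M : Finset (Fin n)} {x y : Fin n} (h : x ∈ M ↔ y ∈ M) :
    M.image ⇑(Equiv.swap x y) = M := by
  apply image_eq_of_maps
  intro z hz
  rcases eq_or_ne z x with rfl | hzx
  · rw [Equiv.swap_apply_left]; exact h.1 hz
  rcases eq_or_ne z y with rfl | hzy
  · rw [Equiv.swap_apply_right]; exact h.2 hz
  · rwa [Equiv.swap_apply_of_ne_of_ne hzx hzy]

variable {k : ℕ}

lemma k_lt_bB (hk : k ∈ K) : k < bB K k :=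
  lt_of_le_of_ne (bB_le K k) (fun e => (bB_notK K k) (e ▸ hk))

include hK in
lemma lower_cB_eq (hk : k ∈ K) {I' : Finset (Fin n)} (hI' : lower n K hK I')
    (hkI : (⟨k, Nat.lt_of_succ_lt (hK k hk)⟩ : Fin n) ∈ I')
    (hk1I : (⟨k + 1, hK k hk⟩ : Fin n) ∉ I') :
    cB n K I' k = k + 1 - aB K k := by
  have hkn : k < n := Nat.lt_of_succ_lt (hK k hk)
  have hkb : k < bB K k := k_lt_bB K hk
  have hbn : bB K k < n := bB_lt K hK hkn
  have hset : I' ∩ Blk n K k = Iset n (aB K k) k := by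
    ext q
    simp only [Finset.mem_inter, Blk, Iset, mem_filter, mem_univ, true_and]
    constructor
    · rintro ⟨hq, hq1, hq2⟩
      refine ⟨hq1, ?_⟩
      by_contra hgt
      push_neg at hgt
      exact hk1I (lower_seg n K hK hI' (p := k + 1) (q := (q : ℕ)) hgt q.isLt
        (fun x hx1 hx2 => blk_interior K (k := k) (by have := aB_le K k; omega) (by omega)) hq
        (hK k hk))
    · rintro ⟨hq1, hq2⟩
      refine ⟨?_, hq1, by omega⟩
      have := lower_seg n K hK hI' (p := (q : ℕ)) (q := k) hq2 hkn
        (fun x hx1 hx2 => blk_interior K (k := k) (by omega) (by omega)) hkI q.isLt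
      simpa using this
  unfold cB
  rw [hset, card_Iset n hkn]

include hK in
lemma lower_mid_full (hk : k ∈ K) {M : Finset (Fin n)} (hM : lower n K hK M)
    (hge : k + 1 - aB K k ≤ cB n K M k) :
    M ∩ Iset n (aB K k) k = Iset n (aB K k) k := by
  rw [Finset.inter_eq_right]
  intro i hi
  simp only [Iset, mem_filter, mem_univ, true_and] at hi
  exact mem_of_card_blk n K hK hM i hi.1 (by have := k_lt_bB K hk; omega)
    (by have := aB_le K k; omega)

include hK in
lemma lower_mid_all (hk : k ∈ K) {M : Finset (Fin n)} (hM : lower n K hK M)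
    (hle : cB n K M k ≤ k + 1 - aB K k) :
    M ∩ Iset n (aB K k) k = M ∩ Blk n K k := by
  have hkb : k < bB K k := k_lt_bB K hk
  apply subset_antisymm
  · refine Finset.inter_subset_inter Finset.Subset.rfl ?_
    intro x hx
    simp only [Iset, Blk, mem_filter, mem_univ, true_and] at hx ⊢
    omega
  · intro q hq
    simp only [Finset.mem_inter, Blk, Iset, mem_filter, mem_univ, true_and] at hq ⊢
    obtain ⟨hqM, hq1, hq2⟩ := hq
    refine ⟨hqM, hq1, ?_⟩
    by_contra hgt
    push_neg at hgt
    have hseg : Iset n (aB K k) (q : ℕ) ⊆ M ∩ Blk n K k := by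
      intro p hp
      simp only [Iset, mem_filter, mem_univ, true_and] at hp
      rw [Finset.mem_inter]
      constructor
      · have := lower_seg n K hK hM (p := (p : ℕ)) (q := (q : ℕ)) hp.2 q.isLt
          (fun x hx1 hx2 => blk_interior K (k := k) (by omega) (by omega)) (by simpa using hqM)
          p.isLt
        simpa using this
      · simp only [Blk, Iset, mem_filter, mem_univ, true_and]
        exact ⟨hp.1, by omega⟩
    have := Finset.card_le_card hseg
    rw [card_Iset n q.isLt] at this
    unfold cB at hle
    have := aB_le K k
    omega

include hK in
lemma blk_split (hk : k ∈ K) (M : Finset (Fin n)) :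
    cB n K M k = (M ∩ Iset n (aB K k) k).card + (M ∩ Iset n (k + 1) (bB K k)).card := by
  have hkb : k < bB K k := k_lt_bB K hk
  have hak : aB K k ≤ k := aB_le K k
  have hsplit : Blk n K k = Iset n (aB K k) k ∪ Iset n (k + 1) (bB K k) := by
    ext x
    simp only [Blk, Iset, Finset.mem_union, mem_filter, mem_univ, true_and]
    omega
  have hdisj : Disjoint (M ∩ Iset n (aB K k) k) (M ∩ Iset n (k + 1) (bB K k)) := by
    rw [Finset.disjoint_left]
    intro x hx hx'
    simp only [Finset.mem_inter, Iset, mem_filter, mem_univ, true_and] at hx hx'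
    omega
  unfold cB
  rw [hsplit, Finset.inter_union_distrib_left, Finset.card_union_of_disjoint hdisj]

lemma lowfilter_inv {u : Equiv.Perm (Fin n)} (hu : u ∈ SK n K hK) (M : Finset (Fin n)) :
    ((M.image ⇑u).filter (fun i : Fin n => (i : ℕ) < aB K k)).card
      = (M.filter (fun i : Fin n => (i : ℕ) < aB K k)).card := by
  rcases Nat.eq_zero_or_pos (aB K k) with h0 | hpos
  · rw [h0]
    rw [Finset.filter_false_of_mem (fun x _ => by omega),
      Finset.filter_false_of_mem (fun x _ => by omega)]
  · have hcg : ∀ M' : Finset (Fin n), M'.filter (fun i : Fin n => (i : ℕ) < aB K k)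
        = M'.filter (fun i : Fin n => (i : ℕ) ≤ aB K k - 1) :=
      fun M' => Finset.filter_congr (fun x _ => by omega)
    rw [hcg, hcg]
    have hnotK : aB K k - 1 ∉ K := by
      rcases aB_spec K k with h | h
      · omega
      · exact h
    exact gN_inv n K hK hnotK hu M

include hK in
lemma gN_split (hk : k ∈ K) (M : Finset (Fin n)) :
    gN n M k = (M.filter (fun i : Fin n => (i : ℕ) < aB K k)).card
      + (M ∩ Iset n (aB K k) k).card := by
  have hak : aB K k ≤ k := aB_le K k
  unfold gN
  have hp : ∀ i ∈ M, ((i : ℕ) ≤ k) ↔ ((i : ℕ) < aB K k ∨ ((i : ℕ) ≥ aB K k ∧ (i : ℕ) ≤ k)) :=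
    fun i _ => by omega
  have hd : Disjoint (M.filter (fun i : Fin n => (i : ℕ) < aB K k))
      (M.filter (fun i : Fin n => (i : ℕ) ≥ aB K k ∧ (i : ℕ) ≤ k)) := by
    rw [Finset.disjoint_left]
    intro x hx hx'
    simp only [mem_filter, ge_iff_le] at hx hx'
    omega
  have hs : M.filter (fun i : Fin n => (i : ℕ) ≥ aB K k ∧ (i : ℕ) ≤ k)
      = M ∩ Iset n (aB K k) k := by
    ext x
    simp only [Finset.mem_inter, Iset, mem_filter, mem_univ, true_and, ge_iff_le]
  rw [Finset.filter_congr hp, Finset.filter_or, Finset.card_union_of_disjoint hd, hs]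

include hK in
/-- Fact C, zero-sum part: `|P| = |Q|`. -/
lemma factC0 (hk : k ∈ K) {I' : Finset (Fin n)} (hI' : lower n K hK I')
    (hkI : (⟨k, Nat.lt_of_succ_lt (hK k hk)⟩ : Fin n) ∈ I')
    (hk1I : (⟨k + 1, hK k hk⟩ : Fin n) ∉ I')
    {w1 : Equiv.Perm (Fin n)} (hw1 : w1 ∈ SK n K hK) :
    ((I'.image ⇑w1) ∩ Iset n (k + 1) (bB K k)).card
      = (Iset n (aB K k) k \ (I'.image ⇑w1)).card := by
  set J1 := I'.image ⇑w1 with hJ1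
  have hkn : k < n := Nat.lt_of_succ_lt (hK k hk)
  have hcbJ1 : cB n K J1 k = k + 1 - aB K k := by
    rw [hJ1, cB_inv n K hK hw1]
    exact lower_cB_eq n K hK hk hI' hkI hk1I
  have e4 : (J1 ∩ Iset n (aB K k) k).card + (J1 ∩ Iset n (k + 1) (bB K k)).card
      = k + 1 - aB K k := by
    rw [← blk_split n K hK hk J1, hcbJ1]
  have eQ : (Iset n (aB K k) k \ J1).card + (Iset n (aB K k) k ∩ J1).card
      = (Iset n (aB K k) k).card := Finset.card_sdiff_add_card_inter _ _
  rw [Finset.inter_comm, card_Iset n hkn] at eQ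
  omega

include hK in
/-- Fact C: the coefficient identity on comparable pairs. -/
lemma factC (hk : k ∈ K) {I' J2 R : Finset (Fin n)} (hI' : lower n K hK I')
    (hkI : (⟨k, Nat.lt_of_succ_lt (hK k hk)⟩ : Fin n) ∈ I')
    (hk1I : (⟨k + 1, hK k hk⟩ : Fin n) ∉ I')
    {w1 : Equiv.Perm (Fin n)} (hw1 : w1 ∈ SK n K hK)
    (hR : lower n K hK R) {u : Equiv.Perm (Fin n)} (hu : u ∈ SK n K hK)
    (hRu : R = J2.image ⇑u)
    (hcomp : J2 ⊆ I'.image ⇑w1 ∨ I'.image ⇑w1 ⊆ J2) :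
    (gN n R k : ℚ) - gN n J2 k =
      ((J2 ∩ ((I'.image ⇑w1) ∩ Iset n (k + 1) (bB K k))).card : ℚ)
        - ((J2 ∩ (Iset n (aB K k) k \ (I'.image ⇑w1))).card : ℚ) := by
  set J1 := I'.image ⇑w1 with hJ1
  have hkn : k < n := Nat.lt_of_succ_lt (hK k hk)
  have hak : aB K k ≤ k := aB_le K k
  have hcbJ1 : cB n K J1 k = k + 1 - aB K k := by
    rw [hJ1, cB_inv n K hK hw1]
    exact lower_cB_eq n K hK hk hI' hkI hk1I
  have hcbR : cB n K R k = cB n K J2 k := by rw [hRu, cB_inv n K hK hu]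
  -- low parts agree
  have hlow : ((R.filter (fun i : Fin n => (i : ℕ) < aB K k)).card : ℚ)
      = ((J2.filter (fun i : Fin n => (i : ℕ) < aB K k)).card : ℚ) := by
    rw [hRu, lowfilter_inv n K hK hu J2]
  have hgR := gN_split n K hK hk R
  have hgJ2 := gN_split n K hK hk J2
  have e4 : (J1 ∩ Iset n (aB K k) k).card + (J1 ∩ Iset n (k + 1) (bB K k)).card
      = k + 1 - aB K k := by
    rw [← blk_split n K hK hk J1, hcbJ1]
  rcases hcomp with hsub | hsub
  · -- J2 ⊆ J1
    have hle : cB n K R k ≤ k + 1 - aB K k := by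
      rw [hcbR, ← hcbJ1]
      exact Finset.card_le_card (Finset.inter_subset_inter hsub Finset.Subset.rfl)
    have f1 : R ∩ Iset n (aB K k) k = R ∩ Blk n K k := lower_mid_all n K hK hk hR hle
    have f2 : (R ∩ Iset n (aB K k) k).card = cB n K J2 k := by
      rw [f1, ← hcbR]; rfl
    have f3 : J2 ∩ (Iset n (aB K k) k \ J1) = ∅ := by
      ext x
      simp only [Finset.mem_inter, Finset.mem_sdiff, Finset.notMem_empty, iff_false]
      rintro ⟨hx1, _, hx3⟩
      exact hx3 (hsub hx1)
    have f4 : J2 ∩ (J1 ∩ Iset n (k + 1) (bB K k)) = J2 ∩ Iset n (k + 1) (bB K k) := by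
      ext x
      simp only [Finset.mem_inter]
      exact ⟨fun ⟨h1, _, h3⟩ => ⟨h1, h3⟩, fun ⟨h1, h3⟩ => ⟨h1, hsub h1, h3⟩⟩
    have f5 := blk_split n K hK hk J2
    rw [f3, f4]
    have hc2 : (gN n R k : ℚ) = ((R.filter (fun i : Fin n => (i : ℕ) < aB K k)).card : ℚ)
        + ((R ∩ Iset n (aB K k) k).card : ℚ) := by exact_mod_cast hgR
    have hc3 : (gN n J2 k : ℚ) = ((J2.filter (fun i : Fin n => (i : ℕ) < aB K k)).card : ℚ)
        + ((J2 ∩ Iset n (aB K k) k).card : ℚ) := by exact_mod_cast hgJ2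
    have hc4 : ((R ∩ Iset n (aB K k) k).card : ℚ) = ((J2 ∩ Iset n (aB K k) k).card : ℚ)
        + ((J2 ∩ Iset n (k + 1) (bB K k)).card : ℚ) := by
      rw [f2]; exact_mod_cast f5
    simp only [Finset.card_empty, Nat.cast_zero]
    linarith
  · -- J1 ⊆ J2
    have hge : k + 1 - aB K k ≤ cB n K R k := by
      rw [hcbR, ← hcbJ1]
      exact Finset.card_le_card (Finset.inter_subset_inter hsub Finset.Subset.rfl)
    have e1 : (R ∩ Iset n (aB K k) k).card = k + 1 - aB K k := by
      rw [lower_mid_full n K hK hk hR hge, card_Iset n hkn]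
    have e2 : J2 ∩ (J1 ∩ Iset n (k + 1) (bB K k)) = J1 ∩ Iset n (k + 1) (bB K k) := by
      rw [Finset.inter_eq_right]
      exact fun x hx => hsub (Finset.mem_inter.1 hx).1
    have e3 : (J2 ∩ (Iset n (aB K k) k \ J1)).card + (J1 ∩ Iset n (aB K k) k).card
        = (J2 ∩ Iset n (aB K k) k).card := by
      have hh : J2 ∩ (Iset n (aB K k) k \ J1) = (J2 ∩ Iset n (aB K k) k) \ J1 := by
        ext x
        simp only [Finset.mem_inter, Finset.mem_sdiff]
        tauto
      have hh2 : (J2 ∩ Iset n (aB K k) k) ∩ J1 = J1 ∩ Iset n (aB K k) k := by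
        ext x
        simp only [Finset.mem_inter]
        exact ⟨fun ⟨⟨_, h2⟩, h3⟩ => ⟨h3, h2⟩, fun ⟨h1, h2⟩ => ⟨⟨hsub h1, h2⟩, h1⟩⟩
      rw [hh, ← hh2]
      exact Finset.card_sdiff_add_card_inter _ _
    rw [e2]
    -- cast everything
    set c := k + 1 - aB K k with hc
    have q1 : ((R ∩ Iset n (aB K k) k).card : ℚ) = (c : ℚ) := by exact_mod_cast e1
    have q3 : ((J2 ∩ (Iset n (aB K k) k \ J1)).card : ℚ) + ((J1 ∩ Iset n (aB K k) k).card : ℚ)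
        = ((J2 ∩ Iset n (aB K k) k).card : ℚ) := by exact_mod_cast e3
    have q4 : ((J1 ∩ Iset n (aB K k) k).card : ℚ) + ((J1 ∩ Iset n (k + 1) (bB K k)).card : ℚ)
        = (c : ℚ) := by exact_mod_cast e4
    have hc2 : (gN n R k : ℚ) = ((R.filter (fun i : Fin n => (i : ℕ) < aB K k)).card : ℚ)
        + ((R ∩ Iset n (aB K k) k).card : ℚ) := by exact_mod_cast hgR
    have hc3 : (gN n J2 k : ℚ) = ((J2.filter (fun i : Fin n => (i : ℕ) < aB K k)).card : ℚ)
        + ((J2 ∩ Iset n (aB K k) k).card : ℚ) := by exact_mod_cast hgJ2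
    linarith

end
end PermutohedronA
namespace PermutohedronA
open Finset MvPolynomial
open scoped Classical

section
variable (n : ℕ) (K : Finset ℕ) (hK : ∀ k ∈ K, k + 1 < n)

lemma theta_mem (j : ℕ) (hj : j + 1 < n) : theta n j hj ∈ Iideal n ⊔ Jideal n :=
  Ideal.mem_sup_left (Ideal.subset_span ⟨j, hj, rfl⟩)

lemma theta_eq (j : ℕ) (hj : j + 1 < n) :
    theta n j hj = ∑ J : FA n, (chiq n J.1 j - chiq n J.1 (j + 1)) • X J := by
  unfold theta
  refine Finset.sum_congr rfl fun J _ => ?_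
  rw [chiq_eq n (Nat.lt_of_succ_lt hj), chiq_eq n hj]

lemma sum_smul_sum_X {ι : Type*} (s : Finset ι) (c : ι → ℚ) (t : ι → FA n → ℚ) :
    ∑ j ∈ s, (c j • ∑ J : FA n, (t j J) • (X J : MvPolynomial (FA n) ℚ))
      = ∑ J : FA n, (∑ j ∈ s, c j * t j J) • X J := by
  calc ∑ j ∈ s, (c j • ∑ J : FA n, t j J • (X J : MvPolynomial (FA n) ℚ))
      = ∑ j ∈ s, ∑ J : FA n, (c j * t j J) • X J := by
        refine Finset.sum_congr rfl fun j _ => ?_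
        rw [Finset.smul_sum]
        exact Finset.sum_congr rfl fun J _ => smul_smul _ _ _
    _ = ∑ J : FA n, ∑ j ∈ s, (c j * t j J) • X J := Finset.sum_comm
    _ = ∑ J : FA n, (∑ j ∈ s, c j * t j J) • X J := by
        exact Finset.sum_congr rfl fun J _ => (Finset.sum_smul).symm

lemma Ypoly_eq (k : ℕ) :
    (∑ I : FAK n K hK, ∑ J ∈ Finset.univ.filter
        (fun J : FA n => ∃ w ∈ SK n K hK, permFA n w ⟨I.1, I.2.1⟩ = J),
      ((((I.1.filter (fun i : Fin n => (i : ℕ) ≤ k)).card : ℚ) -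
        ((J.1.filter (fun i : Fin n => (i : ℕ) ≤ k)).card : ℚ)) • (X J : MvPolynomial (FA n) ℚ)))
    = ∑ J : FA n, ((gN n (Rep n K hK J).1 k : ℚ) - (gN n J.1 k : ℚ)) • X J := by
  rw [← sum_orbit n K hK
    (f := fun J => ((gN n (Rep n K hK J).1 k : ℚ) - (gN n J.1 k : ℚ)) • (X J : MvPolynomial (FA n) ℚ))]
  refine Finset.sum_congr rfl fun I _ => Finset.sum_congr rfl fun J hJ => ?_
  rw [(fiber_eq n K hK I J).1 (Finset.mem_filter.1 hJ).2]
  rfl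

lemma orbit_part_eq (f : FAK n K hK → ℚ) :
    (∑ I : FAK n K hK, f I • orbitSum n K hK ⟨I.1, I.2.1⟩)
      = ∑ J : FA n, f (Rep n K hK J) • X J := by
  rw [← sum_orbit n K hK (f := fun J => f (Rep n K hK J) • (X J : MvPolynomial (FA n) ℚ))]
  refine Finset.sum_congr rfl fun I _ => ?_
  unfold orbitSum
  rw [Finset.smul_sum]
  refine Finset.sum_congr rfl fun J hJ => ?_
  rw [(fiber_eq n K hK I J).1 (Finset.mem_filter.1 hJ).2]

include hK in
/-- polynomial identity behind `φ(η_j) = 0`. -/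
lemma eta_poly (j : ℕ) (hj : j + 1 < n) :
    (∑ k : {k : ℕ // k ∈ K},
      (if j = k.1 then (-2 : ℚ) else if j + 1 = k.1 ∨ k.1 + 1 = j then 1 else 0) •
        (∑ J : FA n, ((gN n (Rep n K hK J).1 k.1 : ℚ) - (gN n J.1 k.1 : ℚ)) • (X J : MvPolynomial (FA n) ℚ)))
      + ∑ I : FAK n K hK, ((chiq n I.1 j - chiq n I.1 (j + 1)) •
          orbitSum n K hK ⟨I.1, I.2.1⟩)
      = theta n j hj := by
  rw [orbit_part_eq n K hK (f := fun I => chiq n I.1 j - chiq n I.1 (j + 1))]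
  rw [sum_smul_sum_X n (s := (Finset.univ : Finset {k : ℕ // k ∈ K}))
    (c := fun k => if j = k.1 then (-2 : ℚ) else if j + 1 = k.1 ∨ k.1 + 1 = j then 1 else 0)
    (t := fun k J => ((gN n (Rep n K hK J).1 k.1 : ℚ) - (gN n J.1 k.1 : ℚ)))]
  rw [theta_eq n j hj, ← Finset.sum_add_distrib]
  refine Finset.sum_congr rfl fun J _ => ?_
  rw [← add_smul]
  congr 1
  have hIJ : ∀ m, m ∉ K → gN n (Rep n K hK J).1 m = gN n J.1 m := by
    intro m hm
    rw [Rep_val]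
    exact gN_inv n K hK hm (repw_mem n K hK J.1) J.1
  have hfa := factA n K hK (I := (Rep n K hK J).1) (J := J.1) hIJ hj
  rw [Finset.univ_eq_attach]
  rw [hfa]
  ring

/-- the `θ`-combination needed for `φ(x_I y_k)`. -/
def Ttheta (b : ℕ → ℚ) : MvPolynomial (FA n) ℚ :=
  ∑ j ∈ (Finset.range (n - 1)).attach,
    (∑ i ∈ Finset.range (j.1 + 1), b i) •
      theta n j.1 (by have := Finset.mem_range.1 j.2; omega)

lemma Ttheta_eq (b : ℕ → ℚ) (hn0 : 1 ≤ n) (hb : ∑ i ∈ Finset.range n, b i = 0) :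
    Ttheta n b = ∑ J : FA n, (∑ i ∈ J.1, b (i : ℕ)) • (X J : MvPolynomial (FA n) ℚ) := by
  unfold Ttheta
  have h1 : ∀ j : {x // x ∈ Finset.range (n - 1)},
      theta n j.1 (by have := Finset.mem_range.1 j.2; omega : j.1 + 1 < n)
        = ∑ J : FA n, (chiq n J.1 j.1 - chiq n J.1 (j.1 + 1)) • (X J : MvPolynomial (FA n) ℚ) :=
    fun j => theta_eq n j.1 _
  rw [Finset.sum_congr rfl (fun j _ => by rw [h1 j])]
  rw [sum_smul_sum_X n (s := (Finset.range (n - 1)).attach)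
    (c := fun j => ∑ i ∈ Finset.range (j.1 + 1), b i)
    (t := fun j J => chiq n J.1 j.1 - chiq n J.1 (j.1 + 1))]
  refine Finset.sum_congr rfl fun J _ => ?_
  congr 1
  rw [Finset.sum_attach (Finset.range (n - 1))
    (fun j => (∑ i ∈ Finset.range (j + 1), b i) * (chiq n J.1 j - chiq n J.1 (j + 1)))]
  exact tele n b hn0 hb J.1

lemma X_mul_Ttheta_mem (b : ℕ → ℚ) (J1 : FA n) :
    (X J1 : MvPolynomial (FA n) ℚ) * Ttheta n b ∈ Iideal n ⊔ Jideal n := by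
  unfold Ttheta
  rw [Finset.mul_sum]
  refine Ideal.sum_mem _ fun j _ => ?_
  rw [mul_smul_comm, smul_eq_C_mul]
  exact Ideal.mul_mem_left _ _ (Ideal.mul_mem_left _ _ (theta_mem n _ _))

end
end PermutohedronA
namespace PermutohedronA
open Finset MvPolynomial
open scoped Classical

section
variable (n : ℕ) (K : Finset ℕ) (hK : ∀ k ∈ K, k + 1 < n)

lemma mk_smul (c : ℚ) (p : MvPolynomial (FA n) ℚ) :
    c • (Ideal.Quotient.mk (Iideal n ⊔ Jideal n) p)
      = Ideal.Quotient.mk (Iideal n ⊔ Jideal n) (c • p) := by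
  rw [← Ideal.Quotient.mkₐ_eq_mk ℚ (Iideal n ⊔ Jideal n), map_smul]

set_option maxHeartbeats 1000000 in
set_option synthInstance.maxHeartbeats 400000 in
lemma gen_eta_ker (j : ℕ) (hj : j + 1 < n) :
    aeval (phiMap n K hK) (etaK n K hK j hj) = 0 := by
  have key : (∑ k : {k : ℕ // k ∈ K},
      (if j = k.1 then (-2 : ℚ) else if j + 1 = k.1 ∨ k.1 + 1 = j then 1 else 0) •
        (∑ I : FAK n K hK, ∑ J ∈ Finset.univ.filter
            (fun J : FA n => ∃ w ∈ SK n K hK, permFA n w ⟨I.1, I.2.1⟩ = J),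
          ((((I.1.filter (fun i : Fin n => (i : ℕ) ≤ k.1)).card : ℚ) -
            ((J.1.filter (fun i : Fin n => (i : ℕ) ≤ k.1)).card : ℚ))
              • (X J : MvPolynomial (FA n) ℚ))))
      + ∑ I : FAK n K hK,
        (((if (⟨j, Nat.lt_of_succ_lt hj⟩ : Fin n) ∈ I.1 then (1 : ℚ) else 0) -
          (if (⟨j + 1, hj⟩ : Fin n) ∈ I.1 then (1 : ℚ) else 0)) •
            orbitSum n K hK ⟨I.1, I.2.1⟩)
      = theta n j hj := by
    have hA : (∑ k : {k : ℕ // k ∈ K},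
        (if j = k.1 then (-2 : ℚ) else if j + 1 = k.1 ∨ k.1 + 1 = j then 1 else 0) •
          (∑ I : FAK n K hK, ∑ J ∈ Finset.univ.filter
              (fun J : FA n => ∃ w ∈ SK n K hK, permFA n w ⟨I.1, I.2.1⟩ = J),
            ((((I.1.filter (fun i : Fin n => (i : ℕ) ≤ k.1)).card : ℚ) -
              ((J.1.filter (fun i : Fin n => (i : ℕ) ≤ k.1)).card : ℚ))
                • (X J : MvPolynomial (FA n) ℚ))))
        = ∑ k : {k : ℕ // k ∈ K},
          (if j = k.1 then (-2 : ℚ) else if j + 1 = k.1 ∨ k.1 + 1 = j then 1 else 0) •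
            (∑ J : FA n, ((gN n (Rep n K hK J).1 k.1 : ℚ) - (gN n J.1 k.1 : ℚ))
              • (X J : MvPolynomial (FA n) ℚ)) :=
      Finset.sum_congr rfl (fun k _ => by rw [Ypoly_eq n K hK k.1])
    have hB : (∑ I : FAK n K hK,
        (((if (⟨j, Nat.lt_of_succ_lt hj⟩ : Fin n) ∈ I.1 then (1 : ℚ) else 0) -
          (if (⟨j + 1, hj⟩ : Fin n) ∈ I.1 then (1 : ℚ) else 0)) •
            orbitSum n K hK ⟨I.1, I.2.1⟩))
        = ∑ I : FAK n K hK, ((chiq n I.1 j - chiq n I.1 (j + 1)) •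
            orbitSum n K hK ⟨I.1, I.2.1⟩) :=
      Finset.sum_congr rfl (fun I _ => by
        rw [chiq_eq n (Nat.lt_of_succ_lt hj), chiq_eq n hj])
    rw [hA, hB]
    exact eta_poly n K hK j hj
  unfold etaK
  rw [map_add, map_sum, map_sum]
  simp only [map_smul, aeval_X, phiMap]
  simp only [mk_smul n]
  rw [← map_sum, ← map_sum, ← map_add, key, Ideal.Quotient.eq_zero_iff_mem]
  exact theta_mem n j hj

set_option maxHeartbeats 1000000 in
set_option synthInstance.maxHeartbeats 400000 in
lemma gen_xx_ker (I J : FAK n K hK) (h1 : ¬ I.1 ⊆ J.1) (h2 : ¬ J.1 ⊆ I.1) :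
    aeval (phiMap n K hK)
      ((X (Sum.inl I) : MvPolynomial (VarK n K hK) ℚ) * X (Sum.inl J)) = 0 := by
  rw [map_mul, aeval_X, aeval_X]
  simp only [phiMap]
  rw [← map_mul, Ideal.Quotient.eq_zero_iff_mem]
  unfold orbitSum
  rw [Finset.sum_mul_sum]
  refine Ideal.sum_mem _ fun J1 hJ1 => Ideal.sum_mem _ fun J2 hJ2 => ?_
  obtain ⟨w1, hw1, he1⟩ := (Finset.mem_filter.1 hJ1).2
  obtain ⟨w2, hw2, he2⟩ := (Finset.mem_filter.1 hJ2).2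
  have hJ1v : J1.1 = I.1.image ⇑w1 := by rw [← he1]; rfl
  have hJ2v : J2.1 = J.1.image ⇑w2 := by rw [← he2]; rfl
  have hlowI := (lowerK_iff n K hK I.1).1 I.2.2
  have hlowJ := (lowerK_iff n K hK J.1).1 J.2.2
  refine Ideal.mem_sup_right (Ideal.subset_span ⟨J1, J2, ?_, ?_, rfl⟩)
  · rw [hJ1v, hJ2v]
    exact factB n K hK hlowI hlowJ h1 hw1 hw2
  · rw [hJ1v, hJ2v]
    exact factB n K hK hlowJ hlowI h2 hw2 hw1

set_option maxHeartbeats 1000000 in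
set_option synthInstance.maxHeartbeats 400000 in
lemma gen_xy_ker (I : FAK n K hK) (k : {k : ℕ // k ∈ K})
    (hni : ¬ (I.1.image (Equiv.swap ⟨k.1, Nat.lt_of_succ_lt (hK k.1 k.2)⟩
        ⟨k.1 + 1, hK k.1 k.2⟩) = I.1)) :
    aeval (phiMap n K hK)
      ((X (Sum.inl I) : MvPolynomial (VarK n K hK) ℚ) * X (Sum.inr k)) = 0 := by
  have hlowI := (lowerK_iff n K hK I.1).1 I.2.2
  have hkI : (⟨k.1, Nat.lt_of_succ_lt (hK k.1 k.2)⟩ : Fin n) ∈ I.1 ∧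
      (⟨k.1 + 1, hK k.1 k.2⟩ : Fin n) ∉ I.1 := by
    by_cases hmem : (⟨k.1 + 1, hK k.1 k.2⟩ : Fin n) ∈ I.1
    · exact absurd (swap_image_eq n (iff_of_true (hlowI k.1 k.2 hmem) hmem)) hni
    · by_cases hmem2 : (⟨k.1, Nat.lt_of_succ_lt (hK k.1 k.2)⟩ : Fin n) ∈ I.1
      · exact ⟨hmem2, hmem⟩
      · exact absurd (swap_image_eq n (iff_of_false hmem2 hmem)) hni
  obtain ⟨hkmem, hk1mem⟩ := hkI
  rw [map_mul, aeval_X, aeval_X]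
  simp only [phiMap]
  rw [← map_mul, Ideal.Quotient.eq_zero_iff_mem]
  rw [Ypoly_eq n K hK k.1]
  unfold orbitSum
  rw [Finset.sum_mul]
  refine Ideal.sum_mem _ fun J1 hJ1 => ?_
  obtain ⟨w1, hw1, he1⟩ := (Finset.mem_filter.1 hJ1).2
  have hJ1v : J1.1 = I.1.image ⇑w1 := by rw [← he1]; rfl
  set bq : ℕ → ℚ := fun i => if h : i < n then
      ((if (⟨i, h⟩ : Fin n) ∈ J1.1 ∩ Iset n (k.1 + 1) (bB K k.1) then (1 : ℚ) else 0) -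
       (if (⟨i, h⟩ : Fin n) ∈ Iset n (aB K k.1) k.1 \ J1.1 then (1 : ℚ) else 0)) else 0
    with hbq
  have hn1 : 1 ≤ n := by have := hK k.1 k.2; omega
  have hsum_fin : ∀ M : Finset (Fin n), ∑ i ∈ M, bq (i : ℕ)
      = ((M ∩ (J1.1 ∩ Iset n (k.1 + 1) (bB K k.1))).card : ℚ)
        - ((M ∩ (Iset n (aB K k.1) k.1 \ J1.1)).card : ℚ) := by
    intro M
    have hterm : ∀ i ∈ M, bq (i : ℕ)
        = (if i ∈ J1.1 ∩ Iset n (k.1 + 1) (bB K k.1) then (1 : ℚ) else 0)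
          - (if i ∈ Iset n (aB K k.1) k.1 \ J1.1 then (1 : ℚ) else 0) := by
      intro i _
      simp only [hbq]
      rw [dif_pos i.isLt]
    rw [Finset.sum_congr rfl hterm, Finset.sum_sub_distrib,
      Finset.sum_ite_mem, Finset.sum_ite_mem, Finset.sum_const, Finset.sum_const]
    simp [nsmul_eq_mul]
  have hb0 : ∑ i ∈ Finset.range n, bq i = 0 := by
    rw [← Fin.sum_univ_eq_sum_range bq n]
    have huniv := hsum_fin Finset.univ
    rw [Finset.univ_inter, Finset.univ_inter] at huniv
    have h00 := factC0 n K hK k.2 hlowI hkmem hk1mem hw1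
    rw [← hJ1v] at h00
    rw [huniv, h00]
    ring
  have hdec : (X J1 : MvPolynomial (FA n) ℚ) *
      (∑ J2 : FA n, ((gN n (Rep n K hK J2).1 k.1 : ℚ) - (gN n J2.1 k.1 : ℚ)) • X J2)
      = (X J1 * ((∑ J2 : FA n, ((gN n (Rep n K hK J2).1 k.1 : ℚ) - (gN n J2.1 k.1 : ℚ)) • X J2)
          - Ttheta n bq)) + X J1 * Ttheta n bq := by ring
  rw [hdec]
  refine Ideal.add_mem _ ?_ (X_mul_Ttheta_mem n bq J1)
  rw [Ttheta_eq n bq hn1 hb0, ← Finset.sum_sub_distrib]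
  rw [Finset.sum_congr rfl (fun J2 (_ : J2 ∈ Finset.univ) => (sub_smul
    ((gN n (Rep n K hK J2).1 k.1 : ℚ) - (gN n J2.1 k.1 : ℚ))
    (∑ i ∈ J2.1, bq (i : ℕ)) (X J2)).symm)]
  rw [Finset.mul_sum]
  refine Ideal.sum_mem _ fun J2 _ => ?_
  rw [mul_smul_comm]
  by_cases hcmp : J2.1 ⊆ J1.1 ∨ J1.1 ⊆ J2.1
  · have hfc := factC n K hK k.2 (J2 := J2.1) (R := (Rep n K hK J2).1) hlowI hkmem hk1mem hw1
      ((lowerK_iff n K hK _).1 (Rep n K hK J2).2.2)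
      (repw_mem n K hK J2.1) (Rep_val n K hK J2) (by rwa [← hJ1v])
    rw [← hJ1v] at hfc
    have hz : (gN n (Rep n K hK J2).1 k.1 : ℚ) - (gN n J2.1 k.1 : ℚ)
        - (∑ i ∈ J2.1, bq (i : ℕ)) = 0 := by
      rw [hsum_fin J2.1, hfc]
      ring
    rw [hz, zero_smul]
    exact Ideal.zero_mem _
  · push_neg at hcmp
    rw [smul_eq_C_mul]
    refine Ideal.mul_mem_left _ _ ?_
    exact Ideal.mem_sup_right (Ideal.subset_span ⟨J1, J2, hcmp.2, hcmp.1, rfl⟩)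

end
end PermutohedronA
open PermutohedronA MvPolynomial in
/-- Proposition 5.6: the kernel of `φ = aeval (phiMap)` contains `𝓘(K) + 𝓙(K)`. -/
theorem statement13 (n : ℕ) (hn : 2 ≤ n) (K : Finset ℕ) (hK : ∀ k ∈ K, k + 1 < n) :
    ∀ p ∈ IKideal n K hK ⊔ JKideal n K hK,
      MvPolynomial.aeval (phiMap n K hK) p = 0 := by
  intro p hp
  rw [IKideal, JKideal, ← Ideal.span_union] at hp
  refine Submodule.span_induction ?_ ?_ ?_ ?_ hp
  · intro x hx
    simp only [Set.mem_union, Set.mem_setOf_eq] at hx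
    rcases hx with ⟨j, hj, rfl⟩ | (⟨I, J, h1, h2, rfl⟩ | ⟨I, k, hni, rfl⟩)
    · exact gen_eta_ker n K hK j hj
    · exact gen_xx_ker n K hK I J h1 h2
    · exact gen_xy_ker n K hK I k hni
  · exact map_zero _
  · intro x y _ _ ihx ihy
    rw [map_add, ihx, ihy, add_zero]
  · intro a x _ ih
    rw [smul_eq_mul, map_mul, ih, mul_zero]
end
end
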